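/- arXiv:2512.08177 — 4 statements merged into one kernel-verified Lean document; each statement's English description precedes it below -/
import Mathlib

section
/- For every mechanism M = (q, u): (i) the guarantee satisfies G(M) = inf_{θ ∈ Θ} { V̲(q(θ)) − θ·q(θ) − u(θ) }; and (ii) G(M) ≤ G*, where G* = V̲(q_ℓ) − θ̄·q_ℓ. -/
open MeasureTheory Set

noncomputable section

/-- The base environment: type space `Θ = [θl, θu]`, capacity `qbar`, lowest inverse
demand `Pl = P̲` (decreasing and continuous on `[0, qbar]` with `Pl 0 > θu`) and the
induced lowest demand `Dl = D̲`, with `Dl θl < qbar`. -/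
structure Env where
  θl : ℝ
  θu : ℝ
  qbar : ℝ
  Pl : ℝ → ℝ
  Dl : ℝ → ℝ
  θl_pos : 0 < θl
  θlu : θl < θu
  qbar_pos : 0 < qbar
  Pl_anti : StrictAntiOn Pl (Icc 0 qbar)
  Pl_cont : ContinuousOn Pl (Icc 0 qbar)
  Pl0 : θu < Pl 0
  Dl_inv : ∀ p, Pl qbar ≤ p → p ≤ Pl 0 → Dl p ∈ Icc (0:ℝ) qbar ∧ Pl (Dl p) = p
  Dl_high : ∀ p, Pl 0 < p → Dl p = 0
  Dl_low : ∀ p, p < Pl qbar → Dl p = qbar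
  Dl_lt : Dl θl < qbar

namespace Env

/-- The type space `Θ = [θl, θu]`. -/
def Θ (E : Env) : Set ℝ := Icc E.θl E.θu

/-- The lowest gross value function `V̲ (x) = ∫_0^x P̲`. -/
def Vl (E : Env) (x : ℝ) : ℝ := ∫ s in (0:ℝ)..x, E.Pl s

/-- `q_ℓ = D̲(θu)`: the efficient quantity at the lowest demand and highest cost. -/
def ql (E : Env) : ℝ := E.Dl E.θu

/-- `G* = V̲(q_ℓ) − θu · q_ℓ`: the maximal attainable guarantee. -/
def Gstar (E : Env) : ℝ := E.Vl E.ql - E.θu * E.ql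

/-- A feasible quantity schedule: weakly decreasing on `Θ`, valued in `[0, qbar]`. -/
def IsSchedule (E : Env) (q : ℝ → ℝ) : Prop :=
  AntitoneOn q E.Θ ∧ ∀ θ ∈ E.Θ, q θ ∈ Icc (0:ℝ) E.qbar

/-- `W̲(θ, q) = V̲(q(θ)) − θ q(θ) − ∫_θ^{θu} q`: ex-post welfare at the lowest demand
with zero rent for the highest type. -/
def Wl (E : Env) (q : ℝ → ℝ) (θ : ℝ) : ℝ :=
  E.Vl (q θ) - θ * q θ - ∫ y in θ..E.θu, q y

/-- An IC and IR (direct) quantity mechanism `(q, u)`. -/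
def IsMech (E : Env) (q u : ℝ → ℝ) : Prop :=
  E.IsSchedule q ∧ 0 ≤ u E.θu ∧
    ∀ θ ∈ E.Θ, u θ = u E.θu + ∫ y in θ..E.θu, q y

/-- The set `𝒱` of admissible gross value functions: integrals of decreasing continuous
inverse demands dominating `P̲` pointwise. -/
def IsValue (E : Env) (V : ℝ → ℝ) : Prop :=
  ∃ P : ℝ → ℝ, StrictAntiOn P (Icc 0 E.qbar) ∧ ContinuousOn P (Icc 0 E.qbar) ∧
    (∀ s ∈ Icc (0:ℝ) E.qbar, E.Pl s ≤ P s) ∧ ∀ x, V x = ∫ s in (0:ℝ)..x, P s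

/-- A Borel probability measure supported in `Θ` (the measure of a cdf `F ∈ 𝒻`). -/
def IsTech (E : Env) (μ : Measure ℝ) : Prop :=
  IsProbabilityMeasure μ ∧ μ (E.Θᶜ) = 0

/-- Ex-ante welfare `W(M; V, F)` of the mechanism `(q, u)` under value `V` and
cost technology `μ`. -/
def W (E : Env) (q u V : ℝ → ℝ) (μ : Measure ℝ) : ℝ :=
  ∫ θ, (V (q θ) - θ * q θ - u θ) ∂μ

/-- The welfare guarantee `G(M) = inf_{V ∈ 𝒱, F ∈ 𝒻} W(M; V, F)`. -/
def G (E : Env) (q u : ℝ → ℝ) : ℝ :=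
  sInf {w : ℝ | ∃ (V : ℝ → ℝ) (μ : Measure ℝ),
    E.IsValue V ∧ E.IsTech μ ∧ w = E.W q u V μ}

/-- The short list: IC and IR mechanisms with the highest guarantee. -/
def ShortList (E : Env) (q u : ℝ → ℝ) : Prop :=
  E.IsMech q u ∧ ∀ q' u' : ℝ → ℝ, E.IsMech q' u' → E.G q' u' ≤ E.G q u

/-- Feasibility in the program (ROPT): a schedule satisfying all robustness
constraints `W̲(θ, q) ≥ G*`. -/
def FeasibleROPT (E : Env) (q : ℝ → ℝ) : Prop :=
  E.IsSchedule q ∧ ∀ θ ∈ E.Θ, E.Gstar ≤ E.Wl q θ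

end Env

/-- A demand `D ∈ 𝒟`, bundled with the inverse demand `P` that induces it:
`P` decreasing and continuous on `[0, qbar]`, `P ≥ P̲` pointwise, `P 0 > θu`. -/
structure Demand (E : Env) where
  P : ℝ → ℝ
  D : ℝ → ℝ
  P_anti : StrictAntiOn P (Icc 0 E.qbar)
  P_cont : ContinuousOn P (Icc 0 E.qbar)
  P_ge : ∀ s ∈ Icc (0:ℝ) E.qbar, E.Pl s ≤ P s
  P0 : E.θu < P 0
  D_inv : ∀ p, P E.qbar ≤ p → p ≤ P 0 → D p ∈ Icc (0:ℝ) E.qbar ∧ P (D p) = p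
  D_high : ∀ p, P 0 < p → D p = 0
  D_low : ∀ p, p < P E.qbar → D p = E.qbar
  D_lt : D E.θl < E.qbar

namespace Demand

/-- The gross value function `V_D(x) = ∫_0^x P` induced by a demand `D ∈ 𝒟`. -/
def V {E : Env} (D : Demand E) (x : ℝ) : ℝ := ∫ s in (0:ℝ)..x, D.P s

end Demand

namespace Env

/-- The lowest demand `D̲` as an element of `𝒟`. -/
def DlDemand (E : Env) : Demand E where
  P := E.Pl
  D := E.Dl
  P_anti := E.Pl_anti
  P_cont := E.Pl_cont
  P_ge := fun _ _ => le_refl _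
  P0 := E.Pl0
  D_inv := E.Dl_inv
  D_high := E.Dl_high
  D_low := E.Dl_low
  D_lt := E.Dl_lt

/-- A price regulation `(p, t)`: nonnegative prices and transfers. -/
def IsPriceReg (E : Env) (p : ℝ → ℝ) (t : ℝ → Demand E → ℝ) : Prop :=
  (∀ θ ∈ E.Θ, 0 ≤ p θ) ∧ ∀ θ ∈ E.Θ, ∀ D : Demand E, 0 ≤ t θ D

/-- The rent `ũ(θ, D) = t(θ, D) − θ · D(p(θ))` of the monopolist. -/
def rent (E : Env) (p : ℝ → ℝ) (t : ℝ → Demand E → ℝ) (θ : ℝ) (D : Demand E) : ℝ :=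
  t θ D - θ * D.D (p θ)

/-- Ex-post incentive compatibility of a price regulation. -/
def EPIC (E : Env) (p : ℝ → ℝ) (t : ℝ → Demand E → ℝ) : Prop :=
  ∀ θ ∈ E.Θ, ∀ θ' ∈ E.Θ, ∀ D : Demand E,
    t θ' D - θ * D.D (p θ') ≤ E.rent p t θ D

/-- Ex-post individual rationality of a price regulation. -/
def EPIR (E : Env) (p : ℝ → ℝ) (t : ℝ → Demand E → ℝ) : Prop :=
  ∀ θ ∈ E.Θ, ∀ D : Demand E, 0 ≤ E.rent p t θ D

/-- Ex-post welfare `w̃(θ; D) = V_D(D(p(θ))) − θ·D(p(θ)) − ũ(θ, D)`. -/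
def wt (E : Env) (p : ℝ → ℝ) (t : ℝ → Demand E → ℝ) (θ : ℝ) (D : Demand E) : ℝ :=
  D.V (D.D (p θ)) - θ * D.D (p θ) - E.rent p t θ D

/-- Ex-ante welfare `W̃((p,t); D, F)` of a price regulation. -/
def Wt (E : Env) (p : ℝ → ℝ) (t : ℝ → Demand E → ℝ) (D : Demand E) (μ : Measure ℝ) : ℝ :=
  ∫ θ, E.wt p t θ D ∂μ

/-- The welfare guarantee `G̃((p,t)) = inf_{D ∈ 𝒟, F ∈ 𝒻} W̃((p,t); D, F)`. -/
def Gt (E : Env) (p : ℝ → ℝ) (t : ℝ → Demand E → ℝ) : ℝ :=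
  sInf {w : ℝ | ∃ (D : Demand E) (μ : Measure ℝ), E.IsTech μ ∧ w = E.Wt p t D μ}

/-- An EPIC and EPIR price regulation. -/
def IsAdmissiblePR (E : Env) (p : ℝ → ℝ) (t : ℝ → Demand E → ℝ) : Prop :=
  E.IsPriceReg p t ∧ E.EPIC p t ∧ E.EPIR p t

/-- The price short list: EPIC and EPIR price regulations with the highest guarantee. -/
def PriceShortList (E : Env) (p : ℝ → ℝ) (t : ℝ → Demand E → ℝ) : Prop :=
  E.IsAdmissiblePR p t ∧
    ∀ (p' : ℝ → ℝ) (t' : ℝ → Demand E → ℝ), E.IsAdmissiblePR p' t' → E.Gt p' t' ≤ E.Gt p t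

end Env

/-- The conjectured model: a regular cdf `F*` with density `f*` on `Θ`, and a
conjectured inverse demand `P*` (with induced demand `D*`) dominating `P̲`. -/
structure Model (E : Env) where
  Fstar : ℝ → ℝ
  fstar : ℝ → ℝ
  Pstar : ℝ → ℝ
  Dstar : ℝ → ℝ
  fstar_pos : ∀ θ ∈ E.Θ, 0 < fstar θ
  Fstar_ac : ∀ θ ∈ E.Θ, Fstar θ = ∫ y in E.θl..θ, fstar y
  Fstar_l : Fstar E.θl = 0
  Fstar_u : Fstar E.θu = 1
  zstar_cont : ContinuousOn (fun θ => θ + Fstar θ / fstar θ) E.Θ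
  zstar_mono : StrictMonoOn (fun θ => θ + Fstar θ / fstar θ) E.Θ
  Pstar_anti : StrictAntiOn Pstar (Icc 0 E.qbar)
  Pstar_cont : ContinuousOn Pstar (Icc 0 E.qbar)
  Pstar_ge : ∀ s ∈ Icc (0:ℝ) E.qbar, E.Pl s ≤ Pstar s
  Pstar0 : E.θu < Pstar 0
  Dstar_inv : ∀ p, Pstar E.qbar ≤ p → p ≤ Pstar 0 →
    Dstar p ∈ Icc (0:ℝ) E.qbar ∧ Pstar (Dstar p) = p
  Dstar_high : ∀ p, Pstar 0 < p → Dstar p = 0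
  Dstar_low : ∀ p, p < Pstar E.qbar → Dstar p = E.qbar
  Dstar_lt : Dstar E.θl < E.qbar

namespace Model

variable {E : Env} (Mo : Model E)

/-- The virtual cost `z*(θ) = θ + F*(θ)/f*(θ)`. -/
def zstar (θ : ℝ) : ℝ := θ + Mo.Fstar θ / Mo.fstar θ

/-- The conjectured gross value function `V*(x) = ∫_0^x P*`. -/
def Vstar (x : ℝ) : ℝ := ∫ s in (0:ℝ)..x, Mo.Pstar s

/-- The Baron–Myerson schedule `q^BM(θ) = D*(z*(θ))`. -/
def qBM (θ : ℝ) : ℝ := Mo.Dstar (Mo.zstar θ)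

/-- The Baron–Myerson-with-quantity-floor schedule `q*(θ) = max{q^BM(θ), q_ℓ}`. -/
def qstar (θ : ℝ) : ℝ := max (Mo.qBM θ) E.ql

/-- The objective of (ROPT): expected virtual surplus under the conjectured model. -/
def J (q : ℝ → ℝ) : ℝ :=
  ∫ θ in E.θl..E.θu, (Mo.Vstar (q θ) - Mo.zstar θ * q θ) * Mo.fstar θ

/-- `q` solves the program (ROPT). -/
def SolvesROPT (q : ℝ → ℝ) : Prop :=
  E.FeasibleROPT q ∧ ∀ q' : ℝ → ℝ, E.FeasibleROPT q' → Mo.J q' ≤ Mo.J q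

/-- `θ*`: the unique solution of `q^BM(θ*) = q_ℓ` in `Θ` when `q^BM(θu) < q_ℓ`;
otherwise `θ* = θu`. -/
def IsThetaStar (θs : ℝ) : Prop :=
  (Mo.qBM E.θu < E.ql ∧ θs ∈ E.Θ ∧ Mo.qBM θs = E.ql) ∨
    (E.ql ≤ Mo.qBM E.θu ∧ θs = E.θu)

/-- `θ^m`: the largest minimizer of `W̲(·, q*)` over `Θ`. -/
def IsThetaM (θm : ℝ) : Prop :=
  θm ∈ E.Θ ∧ (∀ θ' ∈ E.Θ, E.Wl Mo.qstar θm ≤ E.Wl Mo.qstar θ') ∧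
    ∀ θ ∈ E.Θ, (∀ θ' ∈ E.Θ, E.Wl Mo.qstar θ ≤ E.Wl Mo.qstar θ') → θ ≤ θm

/-- The conjectured demand `D*` as an element of `𝒟`. -/
def DstarDemand : Demand E where
  P := Mo.Pstar
  D := Mo.Dstar
  P_anti := Mo.Pstar_anti
  P_cont := Mo.Pstar_cont
  P_ge := Mo.Pstar_ge
  P0 := Mo.Pstar0
  D_inv := Mo.Dstar_inv
  D_high := Mo.Dstar_high
  D_low := Mo.Dstar_low
  D_lt := Mo.Dstar_lt

/-- Expected welfare `W((q,u); V*, F*)` of a quantity mechanism under the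
conjectured model. -/
def WStar (q u : ℝ → ℝ) : ℝ :=
  ∫ θ in E.θl..E.θu, (Mo.Vstar (q θ) - θ * q θ - u θ) * Mo.fstar θ

/-- Expected welfare `W̃((p,t); D*, F*)` of a price regulation under the
conjectured model. -/
def WtStar (p : ℝ → ℝ) (t : ℝ → Demand E → ℝ) : ℝ :=
  ∫ θ in E.θl..E.θu, E.wt p t θ Mo.DstarDemand * Mo.fstar θ

/-- A robustly optimal price regulation: in the price short list, and maximizing
expected welfare under the conjectured model over the price short list. -/
def RobustlyOptimalPR (p : ℝ → ℝ) (t : ℝ → Demand E → ℝ) : Prop :=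
  E.PriceShortList p t ∧
    ∀ (p' : ℝ → ℝ) (t' : ℝ → Demand E → ℝ), E.PriceShortList p' t' →
      Mo.WtStar p' t' ≤ Mo.WtStar p t

/-- A Baron–Myerson-with-price-cap regulation. -/
def IsBMPriceCap (p : ℝ → ℝ) (t : ℝ → Demand E → ℝ) : Prop :=
  E.IsAdmissiblePR p t ∧
  (∀ θ ∈ E.Θ, p θ = min (Mo.zstar θ) E.θu) ∧
  (∀ θ ∈ E.Θ, ∀ D : Demand E,
    E.rent p t θ D = E.rent p t E.θu D + ∫ y in θ..E.θu, D.D (p y)) ∧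
  (∀ D : Demand E, D ≠ E.DlDemand → D ≠ Mo.DstarDemand →
    0 ≤ E.rent p t E.θu D ∧
      E.rent p t E.θu D ≤ D.V (D.D E.θu) - E.θu * D.D E.θu - E.Gstar) ∧
  E.rent p t E.θu E.DlDemand = 0 ∧ E.rent p t E.θu Mo.DstarDemand = 0

end Model

section GuaranteeAux
variable (E : Env)

lemma thetau_mem : E.θu ∈ E.Θ := ⟨E.θlu.le, le_refl _⟩

lemma Pl_qbar_le : E.Pl E.qbar ≤ E.θl := by
  by_contra h
  push_neg at h
  have := E.Dl_low E.θl h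
  exact absurd (this ▸ E.Dl_lt) (lt_irrefl _)

lemma ql_mem : E.ql ∈ Icc (0:ℝ) E.qbar :=
  (E.Dl_inv E.θu ((Pl_qbar_le E).trans E.θlu.le) E.Pl0.le).1

lemma Pl_ql : E.Pl E.ql = E.θu :=
  (E.Dl_inv E.θu ((Pl_qbar_le E).trans E.θlu.le) E.Pl0.le).2

lemma Pl_intInt {a b : ℝ} (ha : a ∈ Icc (0:ℝ) E.qbar) (hb : b ∈ Icc (0:ℝ) E.qbar) :
    IntervalIntegrable E.Pl MeasureTheory.volume a b :=
  (E.Pl_cont.mono (uIcc_subset_Icc ha hb)).intervalIntegrable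

/-- `q_ℓ` maximizes `V̲(x) − θu·x` over `[0, qbar]`. -/
lemma Vl_max {x : ℝ} (hx : x ∈ Icc (0:ℝ) E.qbar) :
    E.Vl x - E.θu * x ≤ E.Gstar := by
  have hql := ql_mem E
  have hsub : E.Vl x - E.Vl E.ql = ∫ s in E.ql..x, E.Pl s :=
    intervalIntegral.integral_interval_sub_left
      (Pl_intInt E (left_mem_Icc.2 E.qbar_pos.le) hx)
      (Pl_intInt E (left_mem_Icc.2 E.qbar_pos.le) hql)
  have key : ∫ s in E.ql..x, E.Pl s ≤ E.θu * (x - E.ql) := by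
    rcases le_total E.ql x with h | h
    · have := intervalIntegral.integral_mono_on h (Pl_intInt E hql hx)
        (intervalIntegrable_const) (fun s hs => by
          rcases eq_or_lt_of_le hs.1 with rfl | hlt
          · exact le_of_eq (Pl_ql E)
          · exact le_of_lt ((Pl_ql E) ▸ E.Pl_anti hql ⟨hql.1.trans hs.1, hs.2.trans hx.2⟩ hlt))
      simpa [mul_comm] using this
    · have := intervalIntegral.integral_mono_on h (intervalIntegrable_const)
        (Pl_intInt E hx hql) (fun s hs => by
          rcases eq_or_lt_of_le hs.2 with heq | hlt
          · exact le_of_eq ((heq ▸ Pl_ql E).symm)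
          · exact le_of_lt ((Pl_ql E) ▸ E.Pl_anti ⟨hx.1.trans hs.1, hs.2.trans hql.2⟩ hql hlt))
      have h2 : ∫ s in E.ql..x, E.Pl s = - ∫ s in x..E.ql, E.Pl s :=
        (intervalIntegral.integral_symm x E.ql)
      rw [h2]
      have h3 : E.θu * (E.ql - x) ≤ ∫ s in x..E.ql, E.Pl s := by
        simpa [mul_comm] using this
      linarith
  have : E.Gstar = E.Vl E.ql - E.θu * E.ql := rfl
  rw [this]
  linarith [hsub ▸ key]

end GuaranteeAux
section GuaranteeAux2
open MeasureTheory
variable (E : Env) (q u : ℝ → ℝ)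

/-- The projection of `ℝ` onto `Θ`. -/
noncomputable def prj (θ : ℝ) : ℝ := max E.θl (min θ E.θu)

lemma prj_mono : Monotone (prj E) :=
  monotone_const.max (monotone_id.min monotone_const)

lemma prj_mem (θ : ℝ) : prj E θ ∈ E.Θ :=
  ⟨le_max_left _ _, max_le E.θlu.le (min_le_right _ _)⟩

lemma prj_eq {θ : ℝ} (hθ : θ ∈ E.Θ) : prj E θ = θ := by
  unfold prj
  rw [min_eq_left hθ.2, max_eq_right hθ.1]



lemma q_intInt (hM : E.IsMech q u) {a b : ℝ} (ha : a ∈ E.Θ) (hb : b ∈ E.Θ) :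
    IntervalIntegrable q MeasureTheory.volume a b :=
  (hM.1.1.mono (uIcc_subset_Icc ha hb)).intervalIntegrable

/-- lower bound for `fl` on `Θ`. -/
lemma fl_lb (hM : E.IsMech q u) : ∃ C : ℝ, ∀ θ ∈ E.Θ,
    C ≤ E.Vl (q θ) - θ * q θ - u θ := by
  obtain ⟨M, hMb⟩ := isCompact_Icc.exists_bound_of_continuousOn E.Pl_cont
  refine ⟨-(M * E.qbar) - E.θu * E.qbar - (u E.θu + (E.θu - E.θl) * E.qbar), fun θ hθ => ?_⟩
  have hq := hM.1.2 θ hθ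
  -- bound Vl (q θ)
  have h1 : |E.Vl (q θ)| ≤ M * E.qbar := by
    have := intervalIntegral.norm_integral_le_of_norm_le_const (C := M)
      (f := E.Pl) (a := 0) (b := q θ) (fun s hs => by
        refine hMb s ?_
        have : Set.uIoc (0:ℝ) (q θ) ⊆ Icc 0 E.qbar := by
          rw [uIoc_of_le hq.1]
          exact Ioc_subset_Icc_self.trans (Icc_subset_Icc le_rfl hq.2)
        exact this hs)
    have hM0 : 0 ≤ M := le_trans (norm_nonneg _) (hMb 0 (left_mem_Icc.2 E.qbar_pos.le))
    calc |E.Vl (q θ)| ≤ M * |q θ - 0| := this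
      _ ≤ M * E.qbar := by
          rw [sub_zero, abs_of_nonneg hq.1]
          exact mul_le_mul_of_nonneg_left hq.2 hM0
  -- bound θ * q θ
  have h2 : θ * q θ ≤ E.θu * E.qbar :=
    mul_le_mul hθ.2 hq.2 hq.1 (E.θl_pos.le.trans (hθ.1.trans hθ.2))
  -- bound u θ
  have h3 : u θ ≤ u E.θu + (E.θu - E.θl) * E.qbar := by
    rw [hM.2.2 θ hθ]
    have hint : ∫ y in θ..E.θu, q y ≤ ∫ y in θ..E.θu, E.qbar := by
      refine intervalIntegral.integral_mono_on hθ.2 (q_intInt E q u hM hθ (thetau_mem E))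
        intervalIntegrable_const (fun y hy => (hM.1.2 y ⟨hθ.1.trans hy.1, hy.2⟩).2)
    have : ∫ y in θ..E.θu, (E.qbar : ℝ) = (E.θu - θ) * E.qbar := by
      simp [mul_comm]
    rw [this] at hint
    have : (E.θu - θ) * E.qbar ≤ (E.θu - E.θl) * E.qbar :=
      mul_le_mul_of_nonneg_right (by linarith [hθ.1]) E.qbar_pos.le
    linarith
  have h1' : -(M * E.qbar) ≤ E.Vl (q θ) := neg_le_of_abs_le h1
  linarith

end GuaranteeAux2
section GuaranteeAux3
open MeasureTheory
variable (E : Env) (q u V : ℝ → ℝ)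

lemma V_ge_Vl (hV : E.IsValue V) {x : ℝ} (hx : x ∈ Icc (0:ℝ) E.qbar) :
    E.Vl x ≤ V x := by
  obtain ⟨P, hPa, hPc, hPge, hVP⟩ := hV
  rw [hVP x]
  exact intervalIntegral.integral_mono_on hx.1
    (Pl_intInt E (left_mem_Icc.2 E.qbar_pos.le) hx)
    ((hPc.mono (uIcc_subset_Icc (left_mem_Icc.2 E.qbar_pos.le) hx)).intervalIntegrable)
    (fun s hs => hPge s ⟨hs.1, hs.2.trans hx.2⟩)

lemma W_ge (hM : E.IsMech q u) {μ : Measure ℝ} (hV : E.IsValue V) (hμ : E.IsTech μ) :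
    sInf ((fun θ => E.Vl (q θ) - θ * q θ - u θ) '' E.Θ) ≤ E.W q u V μ := by
  obtain ⟨P, hPa, hPc, hPge, hVP⟩ := hV
  haveI : IsProbabilityMeasure μ := hμ.1
  have ae_mem : ∀ᵐ θ ∂μ, θ ∈ E.Θ := by
    rw [MeasureTheory.ae_iff]
    exact hμ.2
  -- the clamped value function, continuous on ℝ
  set cl : ℝ → ℝ := fun x => max 0 (min x E.qbar) with hcl
  have cl_cont : Continuous cl := continuous_const.max (continuous_id.min continuous_const)
  have cl_mem : ∀ x, cl x ∈ Icc (0:ℝ) E.qbar :=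
    fun x => ⟨le_max_left _ _, max_le E.qbar_pos.le (min_le_right _ _)⟩
  have cl_eq : ∀ x ∈ Icc (0:ℝ) E.qbar, cl x = x := fun x hx => by
    simp only [hcl]
    rw [min_eq_left hx.2, max_eq_right hx.1]
  have V_cont : ContinuousOn V (Icc (0:ℝ) E.qbar) := by
    have : V = fun x => ∫ s in (0:ℝ)..x, P s := funext hVP
    rw [this, ← uIcc_of_le E.qbar_pos.le]
    exact intervalIntegral.continuousOn_primitive_interval
      (by rw [uIcc_of_le E.qbar_pos.le]; exact hPc.integrableOn_Icc)
  set Vt : ℝ → ℝ := fun x => V (cl x) with hVt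
  have Vt_cont : Continuous Vt := V_cont.comp_continuous cl_cont cl_mem
  -- the globally antitone version of q
  set q' : ℝ → ℝ := fun θ => q (prj E θ) with hq'
  have q'_anti : Antitone q' := fun a b hab =>
    hM.1.1 (prj_mem E a) (prj_mem E b) (prj_mono E hab)
  have q'_meas : Measurable q' := q'_anti.measurable
  have q'_mem : ∀ θ, q' θ ∈ Icc (0:ℝ) E.qbar := fun θ => hM.1.2 _ (prj_mem E θ)
  -- the rent term
  set r : ℝ → ℝ := fun θ => ∫ y in prj E θ..E.θu, q y with hr
  have r_anti : Antitone r := by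
    intro a b hab
    have hpa := prj_mem E a
    have hpb := prj_mem E b
    have hsplit : (∫ y in prj E a..prj E b, q y) + ∫ y in prj E b..E.θu, q y
        = ∫ y in prj E a..E.θu, q y :=
      intervalIntegral.integral_add_adjacent_intervals
        (q_intInt E q u hM hpa hpb) (q_intInt E q u hM hpb (thetau_mem E))
    have hnn : 0 ≤ ∫ y in prj E a..prj E b, q y := by
      refine intervalIntegral.integral_nonneg (prj_mono E hab) (fun y hy => ?_)
      exact (hM.1.2 y ⟨hpa.1.trans hy.1, hy.2.trans hpb.2⟩).1
    simp only [hr]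
    linarith
  have r_meas : Measurable r := r_anti.measurable
  -- f and its measurable version f'
  set f : ℝ → ℝ := fun θ => V (q θ) - θ * q θ - u θ with hf
  set f' : ℝ → ℝ := fun θ => Vt (q' θ) - θ * q' θ - (u E.θu + r θ) with hf'
  have f'_meas : Measurable f' :=
    ((Vt_cont.measurable.comp q'_meas).sub (measurable_id.mul q'_meas)).sub
      (measurable_const.add r_meas)
  have hfe : f =ᵐ[μ] f' := by
    filter_upwards [ae_mem] with θ hθ
    have h1 : q' θ = q θ := by rw [hq']; simp only []; rw [prj_eq E hθ]
    have h2 : Vt (q' θ) = V (q θ) := by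
      rw [h1, hVt]; simp only []; rw [cl_eq _ (hM.1.2 θ hθ)]
    have h3 : u E.θu + r θ = u θ := by
      rw [hr]; simp only []; rw [prj_eq E hθ]; exact (hM.2.2 θ hθ).symm
    simp only [hf, hf']
    rw [h2, h1, h3]
  -- boundedness of f on Θ
  obtain ⟨Mp, hMp⟩ := isCompact_Icc.exists_bound_of_continuousOn hPc
  have hMp0 : 0 ≤ Mp := le_trans (norm_nonneg _) (hMp 0 (left_mem_Icc.2 E.qbar_pos.le))
  have bound : ∀ θ ∈ E.Θ, ‖f θ‖ ≤ Mp * E.qbar + E.θu * E.qbar + (|u E.θu| + (E.θu - E.θl) * E.qbar) := by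
    intro θ hθ
    have hq := hM.1.2 θ hθ
    have h1 : |V (q θ)| ≤ Mp * E.qbar := by
      rw [hVP (q θ)]
      have := intervalIntegral.norm_integral_le_of_norm_le_const (C := Mp)
        (f := P) (a := 0) (b := q θ) (fun s hs => by
          refine hMp s ?_
          have hsub : Set.uIoc (0:ℝ) (q θ) ⊆ Icc 0 E.qbar := by
            rw [uIoc_of_le hq.1]
            exact Ioc_subset_Icc_self.trans (Icc_subset_Icc le_rfl hq.2)
          exact hsub hs)
      calc |∫ s in (0:ℝ)..(q θ), P s| ≤ Mp * |q θ - 0| := this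
        _ ≤ Mp * E.qbar := by
            rw [sub_zero, abs_of_nonneg hq.1]
            exact mul_le_mul_of_nonneg_left hq.2 hMp0
    have h2 : |θ * q θ| ≤ E.θu * E.qbar := by
      rw [abs_of_nonneg (mul_nonneg (E.θl_pos.le.trans hθ.1) hq.1)]
      exact mul_le_mul hθ.2 hq.2 hq.1 (E.θl_pos.le.trans (hθ.1.trans hθ.2))
    have h3 : |u θ| ≤ |u E.θu| + (E.θu - E.θl) * E.qbar := by
      rw [hM.2.2 θ hθ]
      have hb : |∫ y in θ..E.θu, q y| ≤ E.qbar * |E.θu - θ| :=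
        intervalIntegral.norm_integral_le_of_norm_le_const (fun y hy => by
          have hy' : y ∈ E.Θ := by
            rw [uIoc_of_le hθ.2] at hy
            exact ⟨hθ.1.trans hy.1.le, hy.2⟩
          rw [Real.norm_eq_abs, abs_of_nonneg (hM.1.2 y hy').1]
          exact (hM.1.2 y hy').2)
      have : |∫ y in θ..E.θu, q y| ≤ (E.θu - E.θl) * E.qbar := by
        rw [abs_of_nonneg (by linarith [hθ.1, hθ.2] : (0:ℝ) ≤ E.θu - θ)] at hb
        calc |∫ y in θ..E.θu, q y| ≤ E.qbar * (E.θu - θ) := hb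
          _ ≤ (E.θu - E.θl) * E.qbar := by
              rw [mul_comm]
              exact mul_le_mul_of_nonneg_right (by linarith [hθ.1]) E.qbar_pos.le
      calc |u E.θu + ∫ y in θ..E.θu, q y| ≤ |u E.θu| + |∫ y in θ..E.θu, q y| := abs_add_le _ _
        _ ≤ |u E.θu| + (E.θu - E.θl) * E.qbar := by linarith
    simp only [hf, Real.norm_eq_abs]
    calc |V (q θ) - θ * q θ - u θ| ≤ |V (q θ)| + |θ * q θ| + |u θ| := by
          calc |V (q θ) - θ * q θ - u θ| ≤ |V (q θ) - θ * q θ| + |u θ| := abs_sub _ _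
            _ ≤ |V (q θ)| + |θ * q θ| + |u θ| := by linarith [abs_sub (V (q θ)) (θ * q θ)]
      _ ≤ _ := by linarith
  have f_int : Integrable f μ := by
    refine ⟨(f'_meas.aestronglyMeasurable).congr hfe.symm, ?_⟩
    refine HasFiniteIntegral.of_bounded (C := Mp * E.qbar + E.θu * E.qbar + (|u E.θu| + (E.θu - E.θl) * E.qbar)) ?_
    filter_upwards [ae_mem] with θ hθ using bound θ hθ
  -- pointwise lower bound by sInf
  obtain ⟨C, hC⟩ := fl_lb E q u hM
  have bddI : BddBelow ((fun θ => E.Vl (q θ) - θ * q θ - u θ) '' E.Θ) := by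
    refine ⟨C, fun x hx => ?_⟩
    obtain ⟨θ, hθ, rfl⟩ := hx
    exact hC θ hθ
  have flow : ∀ᵐ θ ∂μ, sInf ((fun θ => E.Vl (q θ) - θ * q θ - u θ) '' E.Θ) ≤ f θ := by
    filter_upwards [ae_mem] with θ hθ
    have h1 : E.Vl (q θ) - θ * q θ - u θ ≤ f θ := by
      simp only [hf]
      have := V_ge_Vl E V ⟨P, hPa, hPc, hPge, hVP⟩ (hM.1.2 θ hθ)
      linarith
    exact le_trans (csInf_le bddI (mem_image_of_mem _ hθ)) h1
  have : E.W q u V μ = ∫ θ, f θ ∂μ := rfl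
  rw [this]
  calc sInf ((fun θ => E.Vl (q θ) - θ * q θ - u θ) '' E.Θ)
      = ∫ _, sInf ((fun θ => E.Vl (q θ) - θ * q θ - u θ) '' E.Θ) ∂μ := by simp
    _ ≤ ∫ θ, f θ ∂μ := integral_mono_ae (integrable_const _) f_int flow

end GuaranteeAux3
section GuaranteeAux4
open MeasureTheory
variable (E : Env) (q u : ℝ → ℝ)

lemma Vl_isValue : E.IsValue E.Vl :=
  ⟨E.Pl, E.Pl_anti, E.Pl_cont, fun s _ => le_rfl, fun _ => rfl⟩

lemma dirac_isTech {θ : ℝ} (hθ : θ ∈ E.Θ) : E.IsTech (Measure.dirac θ) := by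
  refine ⟨Measure.dirac.isProbabilityMeasure, ?_⟩
  have hms : MeasurableSet (E.Θᶜ) := by
    rw [Env.Θ]; exact measurableSet_Icc.compl
  rw [Measure.dirac_apply' θ hms]
  exact Set.indicator_of_notMem (by simpa using hθ) _

lemma fl_mem {θ : ℝ} (hθ : θ ∈ E.Θ) :
    E.Vl (q θ) - θ * q θ - u θ ∈ {w : ℝ | ∃ (V : ℝ → ℝ) (μ : Measure ℝ),
      E.IsValue V ∧ E.IsTech μ ∧ w = E.W q u V μ} := by
  refine ⟨E.Vl, Measure.dirac θ, Vl_isValue E, dirac_isTech E hθ, ?_⟩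
  have : E.W q u E.Vl (Measure.dirac θ)
      = ∫ y, (E.Vl (q y) - y * q y - u y) ∂(Measure.dirac θ) := rfl
  rw [this, integral_dirac]

end GuaranteeAux4

/-- Lemma 1 (guarantee): for every IC and IR mechanism `M = (q, u)`,
(i) `G(M) = inf_{θ ∈ Θ} (V̲(q(θ)) − θ q(θ) − u(θ))`, and (ii) `G(M) ≤ G*`. -/
theorem guarantee_characterization (E : Env) (q u : ℝ → ℝ) (hM : E.IsMech q u) :
    E.G q u = sInf ((fun θ => E.Vl (q θ) - θ * q θ - u θ) '' E.Θ) ∧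
      E.G q u ≤ E.Gstar := by
  set I := (fun θ => E.Vl (q θ) - θ * q θ - u θ) '' E.Θ with hI
  set S := {w : ℝ | ∃ (V : ℝ → ℝ) (μ : Measure ℝ),
    E.IsValue V ∧ E.IsTech μ ∧ w = E.W q u V μ} with hS
  obtain ⟨C, hC⟩ := fl_lb E q u hM
  have bddI : BddBelow I := by
    refine ⟨C, fun x hx => ?_⟩
    obtain ⟨θ, hθ, rfl⟩ := hx
    exact hC θ hθ
  have hIne : I.Nonempty := ⟨_, mem_image_of_mem _ (thetau_mem E)⟩
  have hSlb : ∀ w ∈ S, sInf I ≤ w := by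
    rintro w ⟨V, μ, hV, hμ, rfl⟩
    exact W_ge E q u V hM hV hμ
  have hSne : S.Nonempty := ⟨_, fl_mem E q u (thetau_mem E)⟩
  have hGeq : E.G q u = sInf I := by
    refine le_antisymm ?_ (le_csInf hSne hSlb)
    exact le_csInf hIne (fun x hx => by
      obtain ⟨θ, hθ, rfl⟩ := hx
      exact csInf_le ⟨sInf I, hSlb⟩ (fl_mem E q u hθ))
  refine ⟨hGeq, ?_⟩
  rw [hGeq]
  have h1 : sInf I ≤ E.Vl (q E.θu) - E.θu * q E.θu - u E.θu :=
    csInf_le bddI (mem_image_of_mem _ (thetau_mem E))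
  have h2 : E.Vl (q E.θu) - E.θu * q E.θu ≤ E.Gstar :=
    Vl_max E (hM.1.2 _ (thetau_mem E))
  have h3 : 0 ≤ u E.θu := hM.2.1
  linarith
end
end

section
/- A mechanism M = (q, u) is in the short list (i.e., G(M) ≥ G(M') for every mechanism M') if and only if (a) u(θ̄) = 0 and (b) V̲(q(θ)) − θ·q(θ) − ∫_θ^{θ̄} q(y) dy ≥ G* for all θ ∈ Θ. Moreover, every short-list mechanism has guarantee exactly G*. -/
open MeasureTheory Set

noncomputable section

namespace Env
variable (E : Env)

lemma θl_le_θu : E.θl ≤ E.θu := le_of_lt E.θlu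

lemma θu_mem : E.θu ∈ E.Θ := ⟨E.θl_le_θu, le_rfl⟩

lemma ql_mem : E.ql ∈ Icc (0:ℝ) E.qbar := by
  rcases le_or_gt (E.Pl E.qbar) E.θu with h | h
  · exact (E.Dl_inv E.θu h (le_of_lt E.Pl0)).1
  · rw [Env.ql, E.Dl_low _ h]; exact ⟨le_of_lt E.qbar_pos, le_rfl⟩

lemma Pl_ii {a b : ℝ} (ha : a ∈ Icc (0:ℝ) E.qbar) (hb : b ∈ Icc (0:ℝ) E.qbar) :
    IntervalIntegrable E.Pl MeasureTheory.volume a b :=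
  (E.Pl_cont.mono (uIcc_subset_Icc ha hb)).intervalIntegrable

lemma zero_mem : (0:ℝ) ∈ Icc (0:ℝ) E.qbar := ⟨le_rfl, le_of_lt E.qbar_pos⟩

lemma Vl_sub {a b : ℝ} (ha : a ∈ Icc (0:ℝ) E.qbar) (hb : b ∈ Icc (0:ℝ) E.qbar) :
    E.Vl b - E.Vl a = ∫ s in a..b, E.Pl s := by
  have h := intervalIntegral.integral_add_adjacent_intervals
    (E.Pl_ii E.zero_mem ha) (E.Pl_ii ha hb)
  rw [Env.Vl, Env.Vl]; linarith

/-- `x ↦ V̲(x) − θu x` is maximized at `q_ℓ` over `[0, q̄]`, so `G*` is the max. -/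
lemma key_ineq {x : ℝ} (hx : x ∈ Icc (0:ℝ) E.qbar) :
    E.Vl x - E.θu * x ≤ E.Gstar := by
  have hql := E.ql_mem
  have hsub := E.Vl_sub hql hx
  have hanti := E.Pl_anti.antitoneOn
  have key : (∫ s in E.ql..x, E.Pl s) ≤ E.θu * (x - E.ql) := by
    rcases le_or_gt (E.Pl E.qbar) E.θu with hc | hc
    · have hPlql : E.Pl E.ql = E.θu := (E.Dl_inv E.θu hc (le_of_lt E.Pl0)).2
      rcases le_total E.ql x with hx1 | hx1
      · have : (∫ s in E.ql..x, E.Pl s) ≤ ∫ s in E.ql..x, E.θu := by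
          refine intervalIntegral.integral_mono_on hx1 (E.Pl_ii hql hx)
            intervalIntegrable_const (fun s hs => ?_)
          have hs' : s ∈ Icc (0:ℝ) E.qbar := ⟨le_trans hql.1 hs.1, le_trans hs.2 hx.2⟩
          calc E.Pl s ≤ E.Pl E.ql := hanti hql hs' hs.1
            _ = E.θu := hPlql
        simpa [mul_comm] using this
      · have h1 : (∫ s in x..E.ql, E.θu) ≤ ∫ s in x..E.ql, E.Pl s := by
          refine intervalIntegral.integral_mono_on hx1 intervalIntegrable_const
            (E.Pl_ii hx hql) (fun s hs => ?_)
          have hs' : s ∈ Icc (0:ℝ) E.qbar := ⟨le_trans hx.1 hs.1, le_trans hs.2 hql.2⟩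
          calc E.θu = E.Pl E.ql := hPlql.symm
            _ ≤ E.Pl s := hanti hs' hql hs.2
        rw [intervalIntegral.integral_symm]
        have h2 : (∫ s in x..E.ql, E.θu) = (E.ql - x) * E.θu := by
          simp [intervalIntegral.integral_const]
        nlinarith [h1, h2]
    · have hqb : E.ql = E.qbar := E.Dl_low _ hc
      have hx1 : x ≤ E.ql := hqb ▸ hx.2
      have h1 : (∫ s in x..E.ql, E.θu) ≤ ∫ s in x..E.ql, E.Pl s := by
        refine intervalIntegral.integral_mono_on hx1 intervalIntegrable_const
          (E.Pl_ii hx hql) (fun s hs => ?_)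
        have hs' : s ∈ Icc (0:ℝ) E.qbar := ⟨le_trans hx.1 hs.1, le_trans hs.2 hql.2⟩
        calc E.θu ≤ E.Pl E.qbar := le_of_lt hc
          _ ≤ E.Pl s := hanti hs' ⟨le_of_lt E.qbar_pos, le_rfl⟩ (hqb ▸ hs.2)
      rw [intervalIntegral.integral_symm]
      have h2 : (∫ s in x..E.ql, E.θu) = (E.ql - x) * E.θu := by
        simp [intervalIntegral.integral_const]
      nlinarith [h1, h2]
  rw [Env.Gstar]; nlinarith [hsub, key]

lemma isValue_ge {V : ℝ → ℝ} (hV : E.IsValue V) {x : ℝ} (hx : x ∈ Icc (0:ℝ) E.qbar) :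
    E.Vl x ≤ V x := by
  obtain ⟨P, hPa, hPc, hge, hdef⟩ := hV
  rw [hdef, Env.Vl]
  refine intervalIntegral.integral_mono_on hx.1
    (E.Pl_ii E.zero_mem hx)
    ((hPc.mono (uIcc_subset_Icc E.zero_mem hx)).intervalIntegrable)
    (fun s hs => hge s ⟨hs.1, le_trans hs.2 hx.2⟩)

lemma isValue_Vl : E.IsValue E.Vl :=
  ⟨E.Pl, E.Pl_anti, E.Pl_cont, fun _ _ => le_rfl, fun _ => rfl⟩

lemma isTech_dirac {θ : ℝ} (hθ : θ ∈ E.Θ) : E.IsTech (MeasureTheory.Measure.dirac θ) := by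
  refine ⟨by infer_instance, ?_⟩
  show (MeasureTheory.Measure.dirac θ) (Icc E.θl E.θu)ᶜ = 0
  rw [MeasureTheory.Measure.dirac_apply' _ (measurableSet_Icc.compl)]
  simp only [Set.indicator_apply, Set.mem_compl_iff]
  simp [Env.Θ, Set.mem_Icc] at hθ
  simp [hθ.1, hθ.2]

lemma W_dirac (q u V : ℝ → ℝ) (θ : ℝ) :
    E.W q u V (MeasureTheory.Measure.dirac θ) = V (q θ) - θ * q θ - u θ := by
  rw [Env.W, MeasureTheory.integral_dirac]

end Env

namespace Env
variable (E : Env)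

/-- Projection of `ℝ` onto `Θ`. -/
def proj (θ : ℝ) : ℝ := max E.θl (min θ E.θu)

lemma proj_monotone : Monotone E.proj :=
  monotone_const.max (monotone_id.min monotone_const)

lemma proj_mem (θ : ℝ) : E.proj θ ∈ E.Θ :=
  ⟨le_max_left _ _, max_le E.θl_le_θu (min_le_right _ _)⟩

lemma proj_eq {θ : ℝ} (hθ : θ ∈ E.Θ) : E.proj θ = θ := by
  rw [Env.proj, min_eq_left hθ.2, max_eq_right hθ.1]

/-- The key lower bound on welfare: if the (lowest-value) ex-post welfare is at least
`c` on `Θ`, then ex-ante welfare is at least `c` for every admissible `(V, μ)`. -/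
lemma welfare_ge {q u : ℝ → ℝ} (hM : E.IsMech q u) {c : ℝ}
    (hc : ∀ θ ∈ E.Θ, c ≤ E.Vl (q θ) - θ * q θ - u θ)
    {V : ℝ → ℝ} {μ : MeasureTheory.Measure ℝ} (hV : E.IsValue V) (hμ : E.IsTech μ) :
    c ≤ E.W q u V μ := by
  classical
  obtain ⟨⟨hqa, hqm⟩, hu0, huf⟩ := hM
  obtain ⟨P, hPa, hPc, hge, hdef⟩ := hV
  haveI : MeasureTheory.IsProbabilityMeasure μ := hμ.1
  obtain ⟨B, hB⟩ := isCompact_Icc.exists_bound_of_continuousOn hPc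
  have hB0 : 0 ≤ B := le_trans (norm_nonneg _) (hB 0 E.zero_mem)
  have hP_ii : ∀ a ∈ Icc (0:ℝ) E.qbar, ∀ b ∈ Icc (0:ℝ) E.qbar,
      IntervalIntegrable P MeasureTheory.volume a b :=
    fun a ha b hb => (hPc.mono (uIcc_subset_Icc ha hb)).intervalIntegrable
  have hVdiff : ∀ a ∈ Icc (0:ℝ) E.qbar, ∀ b ∈ Icc (0:ℝ) E.qbar,
      |V b - V a| ≤ B * |b - a| := by
    intro a ha b hb
    have h1 : V b - V a = ∫ s in a..b, P s := by
      have h := intervalIntegral.integral_add_adjacent_intervals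
        (hP_ii 0 E.zero_mem a ha) (hP_ii a ha b hb)
      rw [hdef a, hdef b]; linarith
    rw [h1]
    have h2 := intervalIntegral.norm_integral_le_of_norm_le_const
      (C := B) (f := P) (a := a) (b := b)
      (fun s hs => hB s (uIcc_subset_Icc ha hb (uIoc_subset_uIcc hs)))
    simpa [Real.norm_eq_abs] using h2
  have hV0 : V 0 = 0 := by rw [hdef 0, intervalIntegral.integral_same]
  have hVabs : ∀ x ∈ Icc (0:ℝ) E.qbar, |V x| ≤ B * E.qbar := by
    intro x hx
    have h1 := hVdiff 0 E.zero_mem x hx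
    rw [hV0, sub_zero, sub_zero] at h1
    have hxq : |x| ≤ E.qbar := abs_le.2 ⟨by linarith [hx.1, E.qbar_pos], hx.2⟩
    nlinarith
  have hVcont : ContinuousOn V (Icc (0:ℝ) E.qbar) := by
    refine (LipschitzOnWith.of_dist_le_mul (K := Real.toNNReal B) (f := V)
      (s := Icc 0 E.qbar) ?_).continuousOn
    intro x hx y hy
    rw [Real.dist_eq, Real.dist_eq, Real.coe_toNNReal B hB0]
    exact hVdiff y hy x hx
  set clamp : ℝ → ℝ := fun x => max 0 (min x E.qbar) with hclampdef
  have hclamp_mem : ∀ x, clamp x ∈ Icc (0:ℝ) E.qbar :=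
    fun x => ⟨le_max_left _ _, max_le (le_of_lt E.qbar_pos) (min_le_right _ _)⟩
  have hclamp_cont : Continuous clamp := continuous_const.max (continuous_id.min continuous_const)
  have hclamp_eq : ∀ x ∈ Icc (0:ℝ) E.qbar, clamp x = x := fun x hx => by
    simp only [hclampdef]; rw [min_eq_left hx.2, max_eq_right hx.1]
  have hVc : Continuous (V ∘ clamp) := hVcont.comp_continuous hclamp_cont hclamp_mem
  set qt : ℝ → ℝ := fun θ => q (E.proj θ) with hqtdef
  have hqt_anti : Antitone qt := fun a b hab =>
    hqa (E.proj_mem a) (E.proj_mem b) (E.proj_monotone hab)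
  have hqt_mem : ∀ θ, qt θ ∈ Icc (0:ℝ) E.qbar := fun θ => hqm _ (E.proj_mem θ)
  have hqt_ii : ∀ a b : ℝ, IntervalIntegrable qt MeasureTheory.volume a b :=
    fun a b => (hqt_anti.antitoneOn _).intervalIntegrable
  set I0 : ℝ → ℝ := fun x => ∫ y in x..E.θu, qt y with hI0def
  have hI0_anti : Antitone I0 := by
    intro a b hab
    have h := intervalIntegral.integral_add_adjacent_intervals (hqt_ii a b) (hqt_ii b E.θu)
    have hnn : 0 ≤ ∫ y in a..b, qt y :=
      intervalIntegral.integral_nonneg hab (fun y _ => (hqt_mem y).1)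
    simp only [hI0def]; linarith
  have hI0_bound : ∀ x ∈ E.Θ, |I0 x| ≤ E.qbar * (E.θu - E.θl) := by
    intro x hx
    have h := intervalIntegral.norm_integral_le_of_norm_le_const
      (C := E.qbar) (f := qt) (a := x) (b := E.θu)
      (fun y _ => by
        rw [Real.norm_eq_abs]
        exact abs_le.2 ⟨by linarith [(hqt_mem y).1, E.qbar_pos], (hqt_mem y).2⟩)
    rw [Real.norm_eq_abs] at h
    have h2 : |E.θu - x| ≤ E.θu - E.θl := abs_le.2 ⟨by linarith [hx.2, E.θlu], by linarith [hx.1]⟩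
    calc |I0 x| ≤ E.qbar * |E.θu - x| := h
      _ ≤ E.qbar * (E.θu - E.θl) := by nlinarith [E.qbar_pos]
  set g : ℝ → ℝ := fun θ => V (clamp (qt θ)) - E.proj θ * qt θ - (u E.θu + I0 (E.proj θ)) with hgdef
  have hgeq : ∀ θ ∈ E.Θ, g θ = V (q θ) - θ * q θ - u θ := by
    intro θ hθ
    have hqeq : qt θ = q θ := by simp only [hqtdef]; rw [E.proj_eq hθ]
    have hint : I0 θ = ∫ y in θ..E.θu, q y := by
      simp only [hI0def]
      refine intervalIntegral.integral_congr (fun y hy => ?_)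
      have hy' : y ∈ E.Θ := by
        rw [uIcc_of_le hθ.2] at hy; exact ⟨le_trans hθ.1 hy.1, hy.2⟩
      simp only [hqtdef]; rw [E.proj_eq hy']
    simp only [hgdef]
    rw [E.proj_eq hθ, hqeq, hclamp_eq _ (hqm θ hθ), hint, huf θ hθ]
  have hcg : ∀ θ, c ≤ g θ := by
    intro θ
    have h1 : g θ = g (E.proj θ) := by
      simp only [hgdef, hqtdef]
      rw [E.proj_eq (E.proj_mem θ)]
    rw [h1, hgeq _ (E.proj_mem θ)]
    have h2 := hc _ (E.proj_mem θ)
    have h3 := E.isValue_ge ⟨P, hPa, hPc, hge, hdef⟩ (hqm _ (E.proj_mem θ))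
    linarith
  have hproj_cont : Continuous E.proj := continuous_const.max (continuous_id.min continuous_const)
  have hgm : Measurable g := by
    have h1 : Measurable fun θ => V (clamp (qt θ)) := hVc.measurable.comp hqt_anti.measurable
    have h2 : Measurable fun θ => E.proj θ * qt θ :=
      hproj_cont.measurable.mul hqt_anti.measurable
    have h3 : Measurable fun θ => u E.θu + I0 (E.proj θ) :=
      measurable_const.add (hI0_anti.measurable.comp hproj_cont.measurable)
    exact (h1.sub h2).sub h3
  have hgC : ∀ θ, ‖g θ‖ ≤ B * E.qbar + E.θu * E.qbar + (|u E.θu| + E.qbar * (E.θu - E.θl)) := by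
    intro θ
    have h1 := abs_le.1 (hVabs _ (hclamp_mem (qt θ)))
    have hp := E.proj_mem θ
    have h2 : |E.proj θ * qt θ| ≤ E.θu * E.qbar := by
      rw [abs_mul]
      have ha : |E.proj θ| ≤ E.θu := abs_le.2 ⟨by linarith [hp.1, E.θl_pos, E.θlu], hp.2⟩
      have hb : |qt θ| ≤ E.qbar :=
        abs_le.2 ⟨by linarith [(hqt_mem θ).1, E.qbar_pos], (hqt_mem θ).2⟩
      nlinarith [abs_nonneg (E.proj θ), abs_nonneg (qt θ)]
    have h2' := abs_le.1 h2
    have h3 := abs_le.1 (hI0_bound _ hp)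
    have h4 := neg_abs_le (u E.θu)
    have h5 := le_abs_self (u E.θu)
    rw [Real.norm_eq_abs]
    refine abs_le.2 ⟨?_, ?_⟩ <;> simp only [hgdef] <;> linarith
  have hgint : MeasureTheory.Integrable g μ :=
    (MeasureTheory.integrable_const _).mono' hgm.aestronglyMeasurable
      (MeasureTheory.ae_of_all μ hgC)
  have hae : ∀ᵐ θ ∂μ, θ ∈ E.Θ := MeasureTheory.mem_ae_iff.2 hμ.2
  have hW : E.W q u V μ = ∫ θ, g θ ∂μ := by
    rw [Env.W]
    refine MeasureTheory.integral_congr_ae ?_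
    filter_upwards [hae] with θ hθ
    exact (hgeq θ hθ).symm
  rw [hW]
  calc c = ∫ _θ, c ∂μ := by simp
    _ ≤ ∫ θ, g θ ∂μ :=
      MeasureTheory.integral_mono (MeasureTheory.integrable_const c) hgint (fun θ => hcg θ)

/-- Every mechanism's lowest ex-post welfare is bounded below on `Θ`. -/
lemma mech_lb {q u : ℝ → ℝ} (hM : E.IsMech q u) :
    ∃ c, ∀ θ ∈ E.Θ, c ≤ E.Vl (q θ) - θ * q θ - u θ := by
  obtain ⟨⟨hqa, hqm⟩, hu0, huf⟩ := hM
  obtain ⟨B, hB⟩ := isCompact_Icc.exists_bound_of_continuousOn E.Pl_cont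
  refine ⟨-(B * E.qbar) - E.θu * E.qbar - (u E.θu + E.qbar * (E.θu - E.θl)),
    fun θ hθ => ?_⟩
  have hq := hqm θ hθ
  have h1 : |E.Vl (q θ)| ≤ B * E.qbar := by
    rw [Env.Vl]
    have h := intervalIntegral.norm_integral_le_of_norm_le_const
      (C := B) (f := E.Pl) (a := 0) (b := q θ)
      (fun s hs => hB s (uIcc_subset_Icc E.zero_mem hq (uIoc_subset_uIcc hs)))
    rw [Real.norm_eq_abs] at h
    have hxq : |q θ - 0| ≤ E.qbar := by
      rw [sub_zero]; exact abs_le.2 ⟨by linarith [hq.1, E.qbar_pos], hq.2⟩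
    have hB0 : 0 ≤ B := le_trans (norm_nonneg _) (hB 0 E.zero_mem)
    nlinarith [abs_nonneg (q θ - 0)]
  have h2 : θ * q θ ≤ E.θu * E.qbar := by nlinarith [hθ.1, hθ.2, hq.1, hq.2, E.θl_pos]
  have h3 : u θ ≤ u E.θu + E.qbar * (E.θu - E.θl) := by
    rw [huf θ hθ]
    have h := intervalIntegral.norm_integral_le_of_norm_le_const
      (C := E.qbar) (f := q) (a := θ) (b := E.θu)
      (fun y hy => by
        rw [uIoc_of_le hθ.2] at hy
        have hy' : y ∈ E.Θ := ⟨le_trans hθ.1 (le_of_lt hy.1), hy.2⟩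
        rw [Real.norm_eq_abs]
        exact abs_le.2 ⟨by linarith [(hqm y hy').1, E.qbar_pos], (hqm y hy').2⟩)
    rw [Real.norm_eq_abs] at h
    have h2' : |E.θu - θ| ≤ E.θu - E.θl := abs_le.2 ⟨by linarith [hθ.2, E.θlu], by linarith [hθ.1]⟩
    have := le_abs_self (∫ y in θ..E.θu, q y)
    nlinarith [E.qbar_pos]
  have h1' := abs_le.1 h1
  linarith

lemma G_set_nonempty (q u : ℝ → ℝ) :
    {w : ℝ | ∃ (V : ℝ → ℝ) (μ : MeasureTheory.Measure ℝ),
      E.IsValue V ∧ E.IsTech μ ∧ w = E.W q u V μ}.Nonempty :=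
  ⟨_, E.Vl, MeasureTheory.Measure.dirac E.θu, E.isValue_Vl, E.isTech_dirac E.θu_mem, rfl⟩

lemma G_ge {q u : ℝ → ℝ} (hM : E.IsMech q u) {c : ℝ}
    (hc : ∀ θ ∈ E.Θ, c ≤ E.Vl (q θ) - θ * q θ - u θ) : c ≤ E.G q u := by
  refine le_csInf (E.G_set_nonempty q u) ?_
  rintro w ⟨V, μ, hV, hμ, rfl⟩
  exact E.welfare_ge hM hc hV hμ

lemma G_le {q u : ℝ → ℝ} (hM : E.IsMech q u) {θ : ℝ} (hθ : θ ∈ E.Θ) :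
    E.G q u ≤ E.Vl (q θ) - θ * q θ - u θ := by
  obtain ⟨c, hc⟩ := E.mech_lb hM
  refine csInf_le ⟨c, ?_⟩ ?_
  · rintro w ⟨V, μ, hV, hμ, rfl⟩
    exact E.welfare_ge hM hc hV hμ
  · exact ⟨E.Vl, MeasureTheory.Measure.dirac θ, E.isValue_Vl, E.isTech_dirac hθ,
      (E.W_dirac q u E.Vl θ).symm⟩

lemma bench_mech : E.IsMech (fun _ => E.ql) (fun θ => (E.θu - θ) * E.ql) := by
  refine ⟨⟨fun a _ b _ _ => le_rfl, fun θ _ => E.ql_mem⟩, by simp, fun θ hθ => ?_⟩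
  simp [intervalIntegral.integral_const, smul_eq_mul]

lemma bench_ge : E.Gstar ≤ E.G (fun _ => E.ql) (fun θ => (E.θu - θ) * E.ql) := by
  refine le_csInf (E.G_set_nonempty _ _) ?_
  rintro w ⟨V, μ, hV, hμ, rfl⟩
  haveI : MeasureTheory.IsProbabilityMeasure μ := hμ.1
  have hW : E.W (fun _ => E.ql) (fun θ => (E.θu - θ) * E.ql) V μ = V E.ql - E.θu * E.ql := by
    rw [Env.W]
    have h : (fun θ : ℝ => V E.ql - θ * E.ql - (E.θu - θ) * E.ql)
        = fun _ => V E.ql - E.θu * E.ql := funext fun θ => by ring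
    rw [h, MeasureTheory.integral_const]
    simp
  rw [hW, Env.Gstar]
  have := E.isValue_ge hV E.ql_mem
  linarith

end Env

/-- Lemma 2 (short-list characterization): an IC and IR mechanism `M = (q, u)` is in
the short list iff (a) `u(θu) = 0` and (b) `V̲(q(θ)) − θ q(θ) − ∫_θ^{θu} q ≥ G*` for
all `θ ∈ Θ`; moreover every short-list mechanism has guarantee exactly `G*`. -/
theorem shortList_characterization (E : Env) (q u : ℝ → ℝ) (hM : E.IsMech q u) :
    (E.ShortList q u ↔
      (u E.θu = 0 ∧
        ∀ θ ∈ E.Θ, E.Gstar ≤ E.Vl (q θ) - θ * q θ - ∫ y in θ..E.θu, q y)) ∧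
    (E.ShortList q u → E.G q u = E.Gstar) := by
  have hub : ∀ q' u' : ℝ → ℝ, E.IsMech q' u' → E.G q' u' ≤ E.Gstar - u' E.θu := by
    intro q' u' hM'
    have h1 := E.G_le hM' E.θu_mem
    have h2 := E.key_ineq (hM'.1.2 E.θu E.θu_mem)
    linarith
  have hmain : E.ShortList q u →
      u E.θu = 0 ∧
        (∀ θ ∈ E.Θ, E.Gstar ≤ E.Vl (q θ) - θ * q θ - ∫ y in θ..E.θu, q y) ∧
        E.G q u = E.Gstar := by
    intro hS
    have h1 : E.Gstar ≤ E.G q u := le_trans E.bench_ge (hS.2 _ _ E.bench_mech)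
    have h2 := hub q u hM
    have hu0 : u E.θu = 0 := le_antisymm (by linarith) hM.2.1
    refine ⟨hu0, fun θ hθ => ?_, by linarith⟩
    have h3 := E.G_le hM hθ
    rw [hM.2.2 θ hθ, hu0] at h3
    linarith
  refine ⟨⟨fun hS => ⟨(hmain hS).1, (hmain hS).2.1⟩, ?_⟩, fun hS => (hmain hS).2.2⟩
  rintro ⟨hu0, hW⟩
  refine ⟨hM, fun q' u' hM' => ?_⟩
  have hg : E.Gstar ≤ E.G q u := by
    refine E.G_ge hM (fun θ hθ => ?_)
    rw [hM.2.2 θ hθ, hu0]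
    have := hW θ hθ
    linarith
  have h4 := hub q' u' hM'
  have h5 := hM'.2.1
  linarith
end
end

section
/- The Baron–Myerson-with-quantity-floor schedule q* solves (ROPT) — equivalently, the mechanism (q*, u*) with u*(θ) = ∫_θ^{θ̄} q*(y) dy is robustly optimal — if and only if both of the following hold: (i) ∫_{θ̲}^{θ̄} q*(y) dy ≤ ∫_{θ̲}^{θ̄} D̲(y) dy − ∫_{θ̲}^{P̲(q*(θ̲))} (D̲(y) − q*(θ̲)) dy, and (ii) ∫_θ^{θ̄} q*(y) dy ≤ ∫_θ^{θ̄} D̲(y) dy for all θ ∈ Θ. -/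
open MeasureTheory Set

noncomputable section

section DemandPairLemmas

/-- Abstract hypotheses shared by `P̲/D̲` and `P*/D*`. -/
structure DemandPair (qbar : ℝ) (P D : ℝ → ℝ) : Prop where
  qpos : 0 < qbar
  anti : StrictAntiOn P (Icc 0 qbar)
  inv : ∀ p, P qbar ≤ p → p ≤ P 0 → D p ∈ Icc (0:ℝ) qbar ∧ P (D p) = p
  high : ∀ p, P 0 < p → D p = 0
  low : ∀ p, p < P qbar → D p = qbar

namespace DemandPair

variable {qbar : ℝ} {P D : ℝ → ℝ} (h : DemandPair qbar P D)
include h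

lemma mem0 : (0:ℝ) ∈ Icc (0:ℝ) qbar := ⟨le_rfl, h.qpos.le⟩
lemma memq : qbar ∈ Icc (0:ℝ) qbar := ⟨h.qpos.le, le_rfl⟩

lemma Pq_lt_P0 : P qbar < P 0 := h.anti h.mem0 h.memq h.qpos

lemma D_mem (p : ℝ) : D p ∈ Icc (0:ℝ) qbar := by
  rcases lt_or_ge p (P qbar) with hp | hp
  · rw [h.low p hp]; exact h.memq
  rcases le_or_gt p (P 0) with hp' | hp'
  · exact (h.inv p hp hp').1
  · rw [h.high p hp']; exact h.mem0

lemma D_anti : Antitone D := by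
  intro p1 p2 h12
  rcases lt_or_ge p1 (P qbar) with hp | hp
  · rw [h.low p1 hp]; exact (h.D_mem p2).2
  rcases le_or_gt p1 (P 0) with hp' | hp'
  · rcases lt_or_ge (P 0) p2 with hq | hq
    · rw [h.high p2 hq]; exact (h.D_mem p1).1
    · -- both in range
      have h1 := h.inv p1 hp hp'
      have h2 := h.inv p2 (le_trans hp h12) hq
      by_contra hcon
      push_neg at hcon
      have := h.anti (h1.1) (h2.1) hcon
      rw [h1.2, h2.2] at this
      exact absurd h12 (not_le.mpr this)
  · rw [h.high p1 hp', h.high p2 (lt_of_lt_of_le hp' h12)]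

lemma D_P {x : ℝ} (hx : x ∈ Icc (0:ℝ) qbar) : D (P x) = x := by
  have hr1 : P qbar ≤ P x := h.anti.antitoneOn hx h.memq hx.2
  have hr2 : P x ≤ P 0 := h.anti.antitoneOn h.mem0 hx hx.1
  have hi := h.inv (P x) hr1 hr2
  exact h.anti.injOn hi.1 hx hi.2

end DemandPair

end DemandPairLemmas

namespace Env

variable (E : Env)

lemma dp : DemandPair E.qbar E.Pl E.Dl :=
  ⟨E.qbar_pos, E.Pl_anti, E.Dl_inv, E.Dl_high, E.Dl_low⟩

lemma Pl_qbar_le_θl : E.Pl E.qbar ≤ E.θl := by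
  by_contra hcon
  push_neg at hcon
  have := E.Dl_low E.θl hcon
  exact absurd this (ne_of_lt E.Dl_lt)

lemma ql_spec : E.ql ∈ Icc (0:ℝ) E.qbar ∧ E.Pl E.ql = E.θu :=
  E.Dl_inv E.θu (le_trans E.Pl_qbar_le_θl E.θlu.le) E.Pl0.le

lemma Pl_ql : E.Pl E.ql = E.θu := E.ql_spec.2

lemma Pl_II {a b : ℝ} (ha : a ∈ Icc (0:ℝ) E.qbar) (hb : b ∈ Icc (0:ℝ) E.qbar) :
    IntervalIntegrable E.Pl volume a b :=
  (E.Pl_cont.mono (uIcc_subset_Icc ha hb)).intervalIntegrable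

lemma Dl_II (a b : ℝ) : IntervalIntegrable E.Dl volume a b :=
  E.dp.D_anti.intervalIntegrable

/-- Young-type identity for the integral of the inverse demand. -/
lemma young {c d : ℝ} (hc : 0 ≤ c) (hcd : c ≤ d) (hd : d ≤ E.qbar) :
    ∫ t in (E.Pl d)..(E.Pl c), E.Dl t
      = (∫ s in c..d, E.Pl s) + c * E.Pl c - d * E.Pl d := by
  set F : ℝ → ℝ := fun x =>
    (∫ t in (E.Pl x)..(E.Pl c), E.Dl t) - (∫ s in c..x, E.Pl s)
      - c * E.Pl c + x * E.Pl x with hF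
  have hFc : F c = 0 := by
    simp only [hF, intervalIntegral.integral_same]; ring
  have hmemI : ∀ x, c ≤ x → x ≤ d → x ∈ Icc (0:ℝ) E.qbar :=
    fun x h1 h2 => ⟨le_trans hc h1, le_trans h2 hd⟩
  have step : ∀ x1 x2, c ≤ x1 → x1 ≤ x2 → x2 ≤ d →
      |F x2 - F x1| ≤ (x2 - x1) * (E.Pl x1 - E.Pl x2) := by
    intro x1 x2 h1 h12 h2
    have hm1 : x1 ∈ Icc (0:ℝ) E.qbar := hmemI x1 h1 (le_trans h12 h2)
    have hm2 : x2 ∈ Icc (0:ℝ) E.qbar := hmemI x2 (le_trans h1 h12) h2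
    have hmc : c ∈ Icc (0:ℝ) E.qbar := hmemI c le_rfl hcd
    have hP12 : E.Pl x2 ≤ E.Pl x1 := E.Pl_anti.antitoneOn hm1 hm2 h12
    have hP1c : E.Pl x1 ≤ E.Pl c := E.Pl_anti.antitoneOn hmc hm1 h1
    have hsplit1 : (∫ t in (E.Pl x2)..(E.Pl x1), E.Dl t)
        + (∫ t in (E.Pl x1)..(E.Pl c), E.Dl t)
        = ∫ t in (E.Pl x2)..(E.Pl c), E.Dl t :=
      intervalIntegral.integral_add_adjacent_intervals (E.Dl_II _ _) (E.Dl_II _ _)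
    have hsplit2 : (∫ s in c..x1, E.Pl s) + (∫ s in x1..x2, E.Pl s)
        = ∫ s in c..x2, E.Pl s :=
      intervalIntegral.integral_add_adjacent_intervals (E.Pl_II hmc hm1) (E.Pl_II hm1 hm2)
    have hDub : ∫ t in (E.Pl x2)..(E.Pl x1), E.Dl t ≤ (E.Pl x1 - E.Pl x2) * x2 := by
      have := intervalIntegral.integral_mono_on (μ := volume) hP12 (E.Dl_II _ _)
        intervalIntegrable_const (f := E.Dl) (g := fun _ => x2) ?_
      · simpa using this
      · intro t ht
        have : E.Dl t ≤ E.Dl (E.Pl x2) := E.dp.D_anti ht.1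
        rwa [E.dp.D_P hm2] at this
    have hDlb : (E.Pl x1 - E.Pl x2) * x1 ≤ ∫ t in (E.Pl x2)..(E.Pl x1), E.Dl t := by
      have := intervalIntegral.integral_mono_on (μ := volume) hP12 intervalIntegrable_const
        (E.Dl_II _ _) (f := fun _ => x1) (g := E.Dl) ?_
      · simpa using this
      · intro t ht
        have : E.Dl (E.Pl x1) ≤ E.Dl t := E.dp.D_anti ht.2
        rwa [E.dp.D_P hm1] at this
    have hPub : ∫ s in x1..x2, E.Pl s ≤ (x2 - x1) * E.Pl x1 := by
      have := intervalIntegral.integral_mono_on (μ := volume) h12 (E.Pl_II hm1 hm2)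
        intervalIntegrable_const (f := E.Pl) (g := fun _ => E.Pl x1) ?_
      · simpa using this
      · intro s hs
        exact E.Pl_anti.antitoneOn hm1 ⟨le_trans hm1.1 hs.1, le_trans hs.2 hm2.2⟩ hs.1
    have hPlb : (x2 - x1) * E.Pl x2 ≤ ∫ s in x1..x2, E.Pl s := by
      have := intervalIntegral.integral_mono_on (μ := volume) h12 intervalIntegrable_const
        (E.Pl_II hm1 hm2) (f := fun _ => E.Pl x2) (g := E.Pl) ?_
      · simpa using this
      · intro s hs
        exact E.Pl_anti.antitoneOn ⟨le_trans hm1.1 hs.1, le_trans hs.2 hm2.2⟩ hm2 hs.2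
    have hdiff : F x2 - F x1 = (∫ t in (E.Pl x2)..(E.Pl x1), E.Dl t)
        - (∫ s in x1..x2, E.Pl s) + x2 * E.Pl x2 - x1 * E.Pl x1 := by
      simp only [hF]
      rw [← hsplit1, ← hsplit2]; ring
    rw [abs_le]
    constructor <;> nlinarith
  have key : ∀ n : ℕ, 0 < n → |F d| ≤ (d - c) * (E.Pl c - E.Pl d) / n := by
    intro n hn
    set δ : ℝ := (d - c) / n with hδ
    have hnR : (0:ℝ) < n := Nat.cast_pos.mpr hn
    have hδ0 : 0 ≤ δ := div_nonneg (by linarith) hnR.le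
    set x : ℕ → ℝ := fun i => c + i * δ with hx
    have hxmono : ∀ i : ℕ, x i ≤ x (i + 1) := by
      intro i
      simp only [hx]
      push_cast
      nlinarith
    have hxle : ∀ i : ℕ, i ≤ n → x i ≤ d := by
      intro i hi
      have : (i:ℝ) ≤ n := Nat.cast_le.mpr hi
      have : (i:ℝ) * δ ≤ n * δ := by nlinarith
      have hnd : (n:ℝ) * δ = d - c := by
        rw [hδ, mul_comm, div_mul_cancel₀ _ hnR.ne']
      simp only [hx]; linarith
    have hxge : ∀ i : ℕ, c ≤ x i := by
      intro i
      simp only [hx]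
      nlinarith [(Nat.cast_nonneg i : (0:ℝ) ≤ i)]
    have hx0 : x 0 = c := by simp [hx]
    have hxn : x n = d := by
      simp only [hx]
      rw [hδ, mul_comm, div_mul_cancel₀ _ hnR.ne']; ring
    have htel : ∑ i ∈ Finset.range n, (F (x (i+1)) - F (x i)) = F d - F c := by
      rw [Finset.sum_range_sub (fun i => F (x i))]
      rw [hx0, hxn]
    have htel2 : ∑ i ∈ Finset.range n, (E.Pl (x i) - E.Pl (x (i+1)))
        = E.Pl c - E.Pl d := by
      rw [Finset.sum_range_sub' (fun i => E.Pl (x i))]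
      rw [hx0, hxn]
    have hFd : F d = ∑ i ∈ Finset.range n, (F (x (i+1)) - F (x i)) := by
      rw [htel, hFc]; ring
    calc |F d| = |∑ i ∈ Finset.range n, (F (x (i+1)) - F (x i))| := by rw [hFd]
      _ ≤ ∑ i ∈ Finset.range n, |F (x (i+1)) - F (x i)| := Finset.abs_sum_le_sum_abs _ _
      _ ≤ ∑ i ∈ Finset.range n, δ * (E.Pl (x i) - E.Pl (x (i+1))) := by
          apply Finset.sum_le_sum
          intro i hi
          have hi' : i + 1 ≤ n := Finset.mem_range.mp hi
          have hstep := step (x i) (x (i+1)) (hxge i) (hxmono i) (hxle (i+1) hi')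
          have hxd : x (i+1) - x i = δ := by simp only [hx]; push_cast; ring
          rw [hxd] at hstep
          exact hstep
      _ = δ * (E.Pl c - E.Pl d) := by rw [← Finset.mul_sum, htel2]
      _ = (d - c) * (E.Pl c - E.Pl d) / n := by rw [hδ]; ring
  have hF0 : F d = 0 := by
    have hlim : Filter.Tendsto (fun n : ℕ => (d - c) * (E.Pl c - E.Pl d) / n)
        Filter.atTop (nhds 0) := tendsto_const_div_atTop_nhds_zero_nat _
    have hev : ∀ᶠ n : ℕ in Filter.atTop, |F d| ≤ (d - c) * (E.Pl c - E.Pl d) / n :=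
      Filter.eventually_atTop.mpr ⟨1, fun n hn => key n hn⟩
    have habs : |F d| ≤ 0 := ge_of_tendsto hlim hev
    have := abs_nonneg (F d)
    have : |F d| = 0 := le_antisymm habs this
    exact abs_eq_zero.mp this
  simp only [hF] at hF0
  linarith

end Env
namespace Env

variable (E : Env)

/-- `Ψ(x) = V̲(x) − P̲(x)·x − ∫_{P̲(x)}^{θu} D̲ = G*` for `x ∈ [q_ℓ, q̄]`. -/
lemma Psi_eq {x : ℝ} (hx : x ∈ Icc E.ql E.qbar) :
    E.Vl x - E.Pl x * x - (∫ t in (E.Pl x)..E.θu, E.Dl t) = E.Gstar := by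
  have hql := E.ql_mem
  have hy := E.young hql.1 hx.1 hx.2
  rw [E.Pl_ql] at hy
  have hxm : x ∈ Icc (0:ℝ) E.qbar := ⟨le_trans hql.1 hx.1, hx.2⟩
  have hsplit : (∫ s in (0:ℝ)..E.ql, E.Pl s) + (∫ s in E.ql..x, E.Pl s)
      = ∫ s in (0:ℝ)..x, E.Pl s :=
    intervalIntegral.integral_add_adjacent_intervals (E.Pl_II E.dp.mem0 hql) (E.Pl_II hql hxm)
  have hVl : E.Vl x = E.Vl E.ql + ∫ s in E.ql..x, E.Pl s := by
    unfold Vl; linarith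
  unfold Gstar
  rw [hVl]
  linarith

/-- The key identity (KI). -/
lemma KI {x : ℝ} (hx : x ∈ Icc E.ql E.qbar) (θ : ℝ) :
    (∫ y in θ..E.θu, E.Dl y) - (∫ y in θ..(E.Pl x), (E.Dl y - x))
      = E.Vl x - θ * x - E.Gstar := by
  have hxm : x ∈ Icc (0:ℝ) E.qbar := ⟨le_trans E.ql_mem.1 hx.1, hx.2⟩
  have h1 : (∫ y in θ..(E.Pl x), (E.Dl y - x))
      = (∫ y in θ..(E.Pl x), E.Dl y) - (E.Pl x - θ) * x := by
    rw [intervalIntegral.integral_sub (E.Dl_II _ _) intervalIntegrable_const]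
    rw [intervalIntegral.integral_const]
    simp [smul_eq_mul]
  have h2 : (∫ y in θ..E.θu, E.Dl y) - (∫ y in θ..(E.Pl x), E.Dl y)
      = ∫ y in (E.Pl x)..E.θu, E.Dl y :=
    intervalIntegral.integral_interval_sub_left (E.Dl_II _ _) (E.Dl_II _ _)
  have h3 := E.Psi_eq hx
  have hexp : (E.Pl x - θ) * x = E.Pl x * x - θ * x := by ring
  linarith

/-- `G*` is the maximum of `V̲(x) − θu·x` over `[0, q̄]`, attained only at `q_ℓ`. -/
lemma Gstar_max {x : ℝ} (hx : x ∈ Icc (0:ℝ) E.qbar) :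
    E.Vl x - E.θu * x ≤ E.Gstar ∧ (x ≠ E.ql → E.Vl x - E.θu * x < E.Gstar) := by
  have hql := E.ql_mem
  have hsplit : (∫ s in (0:ℝ)..E.ql, E.Pl s) + (∫ s in E.ql..x, E.Pl s)
      = ∫ s in (0:ℝ)..x, E.Pl s :=
    intervalIntegral.integral_add_adjacent_intervals (E.Pl_II E.dp.mem0 hql) (E.Pl_II hql hx)
  have hVl : E.Vl x - E.Vl E.ql = ∫ s in E.ql..x, E.Pl s := by
    unfold Vl; linarith
  -- G* − (V̲ x − θu x) = ∫_{ql}^x (θu − P̲ s) ds (signed)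
  have hkey : E.Gstar - (E.Vl x - E.θu * x)
      = ∫ s in E.ql..x, (E.θu - E.Pl s) := by
    rw [intervalIntegral.integral_sub intervalIntegrable_const (E.Pl_II hql hx),
      intervalIntegral.integral_const]
    unfold Gstar
    simp only [smul_eq_mul]
    linarith
  rcases le_or_gt E.ql x with hcase | hcase
  · have hnn : ∀ s ∈ Icc E.ql x, 0 ≤ E.θu - E.Pl s := by
      intro s hs
      have : E.Pl s ≤ E.Pl E.ql :=
        E.Pl_anti.antitoneOn hql ⟨le_trans hql.1 hs.1, le_trans hs.2 hx.2⟩ hs.1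
      rw [E.Pl_ql] at this; linarith
    have h1 : 0 ≤ ∫ s in E.ql..x, (E.θu - E.Pl s) :=
      intervalIntegral.integral_nonneg hcase hnn
    refine ⟨by linarith, fun hne => ?_⟩
    have hlt : E.ql < x := lt_of_le_of_ne hcase (Ne.symm hne)
    have hpos : 0 < ∫ s in E.ql..x, (E.θu - E.Pl s) := by
      apply intervalIntegral.intervalIntegral_pos_of_pos_on
      · exact (intervalIntegrable_const).sub (E.Pl_II hql hx)
      · intro s hs
        have hsm : s ∈ Icc (0:ℝ) E.qbar := ⟨le_trans hql.1 hs.1.le, le_trans hs.2.le hx.2⟩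
        have : E.Pl s < E.Pl E.ql := E.Pl_anti hql hsm hs.1
        rw [E.Pl_ql] at this; linarith
      · exact hlt
    linarith
  · have hnp : ∀ s ∈ Icc x E.ql, 0 ≤ E.Pl s - E.θu := by
      intro s hs
      have : E.Pl E.ql ≤ E.Pl s :=
        E.Pl_anti.antitoneOn ⟨le_trans hx.1 hs.1, le_trans hs.2 hql.2⟩ hql hs.2
      rw [E.Pl_ql] at this; linarith
    have h1 : 0 ≤ ∫ s in x..E.ql, (E.Pl s - E.θu) :=
      intervalIntegral.integral_nonneg hcase.le hnp
    have hsymm : ∫ s in E.ql..x, (E.θu - E.Pl s) = ∫ s in x..E.ql, (E.Pl s - E.θu) := by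
      rw [intervalIntegral.integral_symm]
      rw [← intervalIntegral.integral_neg]
      congr 1; funext s; ring
    refine ⟨by linarith, fun _ => ?_⟩
    have hpos : 0 < ∫ s in x..E.ql, (E.Pl s - E.θu) := by
      apply intervalIntegral.intervalIntegral_pos_of_pos_on
      · exact (E.Pl_II hx hql).sub intervalIntegrable_const
      · intro s hs
        have hsm : s ∈ Icc (0:ℝ) E.qbar := ⟨le_trans hx.1 hs.1.le, le_trans hs.2.le hql.2⟩
        have : E.Pl E.ql < E.Pl s := E.Pl_anti hsm hql hs.2
        rw [E.Pl_ql] at this; linarith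
      · exact hcase
    linarith

lemma θl_mem : E.θl ∈ E.Θ := ⟨le_rfl, E.θlu.le⟩

/-- Any feasible schedule stays in `[q_ℓ, q̄]` on `Θ`. -/
lemma feas_bounds {q : ℝ → ℝ} (hf : E.FeasibleROPT q) :
    ∀ θ ∈ E.Θ, q θ ∈ Icc E.ql E.qbar := by
  have hqu : q E.θu = E.ql := by
    have hc := hf.2 E.θu E.θu_mem
    unfold Wl at hc
    rw [intervalIntegral.integral_same] at hc
    have hm := hf.1.2 E.θu E.θu_mem
    by_contra hne
    have := (E.Gstar_max hm).2 hne
    linarith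
  intro θ hθ
  refine ⟨?_, (hf.1.2 θ hθ).2⟩
  rw [← hqu]
  exact hf.1.1 hθ E.θu_mem hθ.2

end Env

namespace Model

variable {E : Env} (Mo : Model E)

lemma dps : DemandPair E.qbar Mo.Pstar Mo.Dstar :=
  ⟨E.qbar_pos, Mo.Pstar_anti, Mo.Dstar_inv, Mo.Dstar_high, Mo.Dstar_low⟩

lemma ql_le_qstar (θ : ℝ) : E.ql ≤ Mo.qstar θ := le_max_right _ _

lemma qstar_mem (θ : ℝ) : Mo.qstar θ ∈ Icc E.ql E.qbar :=
  ⟨le_max_right _ _, max_le (Mo.dps.D_mem _).2 E.ql_mem.2⟩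

lemma qstar_mem' (θ : ℝ) : Mo.qstar θ ∈ Icc (0:ℝ) E.qbar :=
  ⟨le_trans E.ql_mem.1 (Mo.ql_le_qstar θ), (Mo.qstar_mem θ).2⟩

lemma qstar_anti : AntitoneOn Mo.qstar E.Θ := by
  intro a ha b hb hab
  have hz : Mo.zstar a ≤ Mo.zstar b := (Mo.zstar_mono.monotoneOn) ha hb hab
  exact max_le_max (Mo.dps.D_anti hz) le_rfl

lemma qstar_II {a b : ℝ} (ha : a ∈ E.Θ) (hb : b ∈ E.Θ) :
    IntervalIntegrable Mo.qstar volume a b :=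
  (Mo.qstar_anti.mono (uIcc_subset_Icc ha hb)).intervalIntegrable

end Model
namespace Model

variable {E : Env} (Mo : Model E)

lemma Pstar_II {a b : ℝ} (ha : a ∈ Icc (0:ℝ) E.qbar) (hb : b ∈ Icc (0:ℝ) E.qbar) :
    IntervalIntegrable Mo.Pstar volume a b :=
  (Mo.Pstar_cont.mono (uIcc_subset_Icc ha hb)).intervalIntegrable

/-- Pointwise optimality of `max (D*(z)) q_ℓ` for `x ↦ V*(x) − z·x` over `[q_ℓ, q̄]`. -/
lemma argmax {z x : ℝ} (hx1 : E.ql ≤ x) (hx2 : x ≤ E.qbar) :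
    Mo.Vstar x - z * x
      ≤ Mo.Vstar (max (Mo.Dstar z) E.ql) - z * max (Mo.Dstar z) E.ql := by
  set m := max (Mo.Dstar z) E.ql with hm
  have hql := E.ql_mem
  have hmm : m ∈ Icc (0:ℝ) E.qbar :=
    ⟨le_trans hql.1 (le_max_right _ _), max_le (Mo.dps.D_mem _).2 hql.2⟩
  have hxm : x ∈ Icc (0:ℝ) E.qbar := ⟨le_trans hql.1 hx1, hx2⟩
  have hVdiff : Mo.Vstar m - Mo.Vstar x = ∫ s in x..m, Mo.Pstar s := by
    have := intervalIntegral.integral_interval_sub_left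
      (Mo.Pstar_II Mo.dps.mem0 hmm) (Mo.Pstar_II Mo.dps.mem0 hxm)
    unfold Vstar
    linarith
  rcases le_or_gt x m with hcase | hcase
  · rcases eq_or_lt_of_le hcase with heq | hlt
    · rw [← heq]
    -- x < m, so m = Dstar z
    have hmd : m = Mo.Dstar z := by
      rcases max_cases (Mo.Dstar z) E.ql with ⟨he, _⟩ | ⟨he, _⟩
      · rw [hm, he]
      · exfalso; rw [hm, he] at hlt; exact absurd hx1 (not_le.mpr hlt)
    have hub : ∀ s ∈ Icc x m, z ≤ Mo.Pstar s := by
      intro s hs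
      have hsm : s ∈ Icc (0:ℝ) E.qbar := ⟨le_trans hxm.1 hs.1, le_trans hs.2 hmm.2⟩
      rcases lt_or_ge z (Mo.Pstar E.qbar) with hz | hz
      · have : Mo.Pstar E.qbar ≤ Mo.Pstar s := Mo.Pstar_anti.antitoneOn hsm Mo.dps.memq hsm.2
        linarith
      rcases le_or_gt z (Mo.Pstar 0) with hz' | hz'
      · have hd := Mo.Dstar_inv z hz hz'
        have : Mo.Pstar (Mo.Dstar z) ≤ Mo.Pstar s := by
          apply Mo.Pstar_anti.antitoneOn hsm hd.1
          rw [← hmd]; exact hs.2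
        rw [hd.2] at this; exact this
      · exfalso
        have := Mo.Dstar_high z hz'
        rw [hmd, this] at hlt
        exact absurd hxm.1 (not_le.mpr hlt)
    have hint : z * (m - x) ≤ ∫ s in x..m, Mo.Pstar s := by
      have := intervalIntegral.integral_mono_on (μ := volume) hcase
        intervalIntegrable_const (Mo.Pstar_II hxm hmm) (f := fun _ => z) (g := Mo.Pstar) hub
      simpa [mul_comm] using this
    linarith
  · -- m < x
    have hub : ∀ s ∈ Icc m x, Mo.Pstar s ≤ z := by
      intro s hs
      have hsm : s ∈ Icc (0:ℝ) E.qbar := ⟨le_trans hmm.1 hs.1, le_trans hs.2 hxm.2⟩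
      rcases lt_or_ge (Mo.Pstar 0) z with hz | hz
      · have : Mo.Pstar s ≤ Mo.Pstar 0 := Mo.Pstar_anti.antitoneOn Mo.dps.mem0 hsm hsm.1
        linarith
      rcases le_or_gt (Mo.Pstar E.qbar) z with hz' | hz'
      · have hd := Mo.Dstar_inv z hz' hz
        have : Mo.Pstar s ≤ Mo.Pstar (Mo.Dstar z) := by
          apply Mo.Pstar_anti.antitoneOn hd.1 hsm
          exact le_trans (le_max_left _ _) hs.1
        rw [hd.2] at this; exact this
      · exfalso
        have hdq := Mo.Dstar_low z hz'
        have : E.qbar ≤ m := by rw [hm]; rw [← hdq]; exact le_max_left _ _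
        linarith [hs.1, hs.2, hxm.2, lt_of_le_of_lt this hcase]
    have hint : ∫ s in m..x, Mo.Pstar s ≤ z * (x - m) := by
      have := intervalIntegral.integral_mono_on (μ := volume) hcase.le
        (Mo.Pstar_II hmm hxm) intervalIntegrable_const (f := Mo.Pstar) (g := fun _ => z) hub
      simpa [mul_comm] using this
    have hsymm : (∫ s in x..m, Mo.Pstar s) = -∫ s in m..x, Mo.Pstar s :=
      intervalIntegral.integral_symm _ _
    linarith

end Model
namespace Model

variable {E : Env} (Mo : Model E)

lemma fstar_II : IntervalIntegrable Mo.fstar volume E.θl E.θu := by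
  by_contra h
  have h0 := intervalIntegral.integral_undef h
  have h1 := Mo.Fstar_ac E.θu E.θu_mem
  rw [Mo.Fstar_u, h0] at h1
  exact one_ne_zero h1

lemma Vstar_contOn : ContinuousOn Mo.Vstar (Icc (0:ℝ) E.qbar) := by
  have hint : IntegrableOn Mo.Pstar (uIcc (0:ℝ) E.qbar) := by
    rw [uIcc_of_le E.qbar_pos.le]
    exact Mo.Pstar_cont.integrableOn_Icc
  have := intervalIntegral.continuousOn_primitive_interval (a := (0:ℝ)) (b := E.qbar)
    (μ := volume) hint
  rw [uIcc_of_le E.qbar_pos.le] at this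
  exact this

/-- Integrability of the (ROPT) objective integrand for any bounded monotone schedule. -/
lemma obj_II {q : ℝ → ℝ} (hanti : AntitoneOn q E.Θ)
    (hmem : ∀ θ ∈ E.Θ, q θ ∈ Icc (0:ℝ) E.qbar) :
    IntervalIntegrable (fun θ => (Mo.Vstar (q θ) - Mo.zstar θ * q θ) * Mo.fstar θ)
      volume E.θl E.θu := by
  have hle : E.θl ≤ E.θu := E.θlu.le
  have hfii : IntegrableOn Mo.fstar (Ioc E.θl E.θu) volume := by
    have := Mo.fstar_II
    rwa [intervalIntegrable_iff_integrableOn_Ioc_of_le hle] at this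
  rw [intervalIntegrable_iff_integrableOn_Ioc_of_le hle]
  set μ := volume.restrict (Ioc E.θl E.θu) with hμ
  have hq : AEMeasurable q μ := by
    have h1 : AEMeasurable q (volume.restrict E.Θ) :=
      aemeasurable_restrict_of_antitoneOn measurableSet_Icc hanti
    exact h1.mono_measure (Measure.restrict_mono Ioc_subset_Icc_self le_rfl)
  -- clamped versions
  set c1 : ℝ → ℝ := fun y => max 0 (min y E.qbar) with hc1def
  have hc1 : Continuous c1 := continuous_const.max (continuous_id.min continuous_const)
  have hc1mem : ∀ y, c1 y ∈ Icc (0:ℝ) E.qbar :=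
    fun y => ⟨le_max_left _ _, max_le E.qbar_pos.le (min_le_right _ _)⟩
  have hc1id : ∀ y ∈ Icc (0:ℝ) E.qbar, c1 y = y := by
    intro y hy
    simp only [hc1def]
    rw [min_eq_left hy.2, max_eq_right hy.1]
  set c2 : ℝ → ℝ := fun θ => max E.θl (min θ E.θu) with hc2def
  have hc2 : Continuous c2 := continuous_const.max (continuous_id.min continuous_const)
  have hc2mem : ∀ θ, c2 θ ∈ E.Θ :=
    fun θ => ⟨le_max_left _ _, max_le hle (min_le_right _ _)⟩
  have hc2id : ∀ θ ∈ E.Θ, c2 θ = θ := by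
    intro θ hθ
    simp only [hc2def]
    rw [min_eq_left hθ.2, max_eq_right hθ.1]
  set Vt : ℝ → ℝ := fun y => Mo.Vstar (c1 y) with hVt
  have hVtc : Continuous Vt := Mo.Vstar_contOn.comp_continuous hc1 hc1mem
  set zt : ℝ → ℝ := fun θ => Mo.zstar (c2 θ) with hzt
  have hztc : Continuous zt := by
    have : ContinuousOn (fun θ => θ + Mo.Fstar θ / Mo.fstar θ) E.Θ := Mo.zstar_cont
    exact this.comp_continuous hc2 hc2mem
  -- bounds
  obtain ⟨C1, hC1⟩ : ∃ C, ∀ y ∈ Icc (0:ℝ) E.qbar, ‖Mo.Vstar y‖ ≤ C :=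
    isCompact_Icc.exists_bound_of_continuousOn Mo.Vstar_contOn
  obtain ⟨C2, hC2⟩ : ∃ C, ∀ θ ∈ E.Θ, ‖Mo.zstar θ‖ ≤ C :=
    isCompact_Icc.exists_bound_of_continuousOn Mo.zstar_cont
  -- the auxiliary integrand
  have hg : AEStronglyMeasurable (fun θ => Vt (q θ) - zt θ * q θ) μ := by
    have h1 : AEMeasurable (fun θ => Vt (q θ)) μ :=
      hVtc.measurable.comp_aemeasurable hq
    have h2 : AEMeasurable (fun θ => zt θ * q θ) μ :=
      (hztc.measurable.aemeasurable).mul hq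
    exact (h1.sub h2).aestronglyMeasurable
  have hbound : ∀ᵐ θ ∂μ, ‖Vt (q θ) - zt θ * q θ‖ ≤ |C1| + |C2| * E.qbar := by
    rw [hμ]
    filter_upwards [ae_restrict_mem measurableSet_Ioc] with θ hθ
    have hθ' : θ ∈ E.Θ := Ioc_subset_Icc_self hθ
    have hq' := hmem θ hθ'
    have hb1 : ‖Vt (q θ)‖ ≤ |C1| := by
      have := hC1 (c1 (q θ)) (hc1mem _)
      exact le_trans this (le_abs_self _)
    have hb2 : ‖zt θ * q θ‖ ≤ |C2| * E.qbar := by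
      rw [norm_mul]
      apply mul_le_mul
      · exact le_trans (hC2 (c2 θ) (hc2mem θ)) (le_abs_self _)
      · rw [Real.norm_eq_abs, abs_of_nonneg hq'.1]; exact hq'.2
      · exact norm_nonneg _
      · exact abs_nonneg _
    calc ‖Vt (q θ) - zt θ * q θ‖ ≤ ‖Vt (q θ)‖ + ‖zt θ * q θ‖ := norm_sub_le _ _
      _ ≤ |C1| + |C2| * E.qbar := add_le_add hb1 hb2
  have hint : Integrable (fun θ => (Vt (q θ) - zt θ * q θ) * Mo.fstar θ) μ :=
    Integrable.bdd_mul hfii hg hbound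
  apply hint.congr
  rw [hμ]
  filter_upwards [ae_restrict_mem measurableSet_Ioc] with θ hθ
  have hθ' : θ ∈ E.Θ := Ioc_subset_Icc_self hθ
  simp only [hVt, hzt]
  rw [hc1id _ (hmem θ hθ'), hc2id _ hθ']

end Model
/-- Proposition 1 (optimality of Baron–Myerson-with-quantity-floor): `q*` solves (ROPT)
iff (i) the robustness constraint holds at the bottom `θl`, and (ii) the weak
majorization constraints hold for all `θ ∈ Θ`. -/
theorem BMfloor_optimal_iff (E : Env) (Mo : Model E) :
    Mo.SolvesROPT Mo.qstar ↔
      ((∫ y in E.θl..E.θu, Mo.qstar y) ≤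
          (∫ y in E.θl..E.θu, E.Dl y) -
            ∫ y in E.θl..(E.Pl (Mo.qstar E.θl)), (E.Dl y - Mo.qstar E.θl)) ∧
        ∀ θ ∈ E.Θ, (∫ y in θ..E.θu, Mo.qstar y) ≤ ∫ y in θ..E.θu, E.Dl y := by
  constructor
  · rintro ⟨⟨hsch, hcons⟩, -⟩
    constructor
    · have h := hcons E.θl E.θl_mem
      unfold Env.Wl at h
      have hKI := E.KI (Mo.qstar_mem E.θl) E.θl
      linarith
    · intro θ hθ
      have h := hcons θ hθ
      unfold Env.Wl at h
      have hxm : Mo.qstar θ ∈ Icc E.ql E.qbar := Mo.qstar_mem θ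
      have hxm' : Mo.qstar θ ∈ Icc (0:ℝ) E.qbar := Mo.qstar_mem' θ
      have hKI := E.KI hxm θ
      have hextra : 0 ≤ ∫ y in θ..(E.Pl (Mo.qstar θ)), (E.Dl y - Mo.qstar θ) := by
        rcases le_total θ (E.Pl (Mo.qstar θ)) with h1 | h1
        · apply intervalIntegral.integral_nonneg h1
          intro y hy
          have : E.Dl (E.Pl (Mo.qstar θ)) ≤ E.Dl y := E.dp.D_anti hy.2
          rw [E.dp.D_P hxm'] at this
          linarith
        · have h2 : 0 ≤ ∫ y in (E.Pl (Mo.qstar θ))..θ, (Mo.qstar θ - E.Dl y) := by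
            apply intervalIntegral.integral_nonneg h1
            intro y hy
            have : E.Dl y ≤ E.Dl (E.Pl (Mo.qstar θ)) := E.dp.D_anti hy.1
            rw [E.dp.D_P hxm'] at this
            linarith
          have h3 : (∫ y in (E.Pl (Mo.qstar θ))..θ, (Mo.qstar θ - E.Dl y))
              = -∫ y in (E.Pl (Mo.qstar θ))..θ, (E.Dl y - Mo.qstar θ) := by
            rw [← intervalIntegral.integral_neg]
            congr 1; funext y; ring
          have h4 : (∫ y in θ..(E.Pl (Mo.qstar θ)), (E.Dl y - Mo.qstar θ))
              = -∫ y in (E.Pl (Mo.qstar θ))..θ, (E.Dl y - Mo.qstar θ) :=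
            intervalIntegral.integral_symm _ _
          linarith
      linarith
  · rintro ⟨hi, hii⟩
    have hWl0 : E.Gstar ≤ E.Wl Mo.qstar E.θl := by
      unfold Env.Wl
      have hKI := E.KI (Mo.qstar_mem E.θl) E.θl
      linarith
    have hcons : ∀ θ ∈ E.Θ, E.Gstar ≤ E.Wl Mo.qstar θ := by
      intro θ hθ
      have hxm : Mo.qstar θ ∈ Icc E.ql E.qbar := Mo.qstar_mem θ
      have hxm' : Mo.qstar θ ∈ Icc (0:ℝ) E.qbar := Mo.qstar_mem' θ
      have hp_le : E.Pl (Mo.qstar θ) ≤ E.θu := by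
        have := E.Pl_anti.antitoneOn E.ql_mem hxm' hxm.1
        rwa [E.Pl_ql] at this
      rcases lt_or_ge (E.Pl (Mo.qstar θ)) E.θl with hC | hAB
      · -- case C : use monotonicity from θl and the constraint at θl
        have hxl : Mo.qstar θ ≤ Mo.qstar E.θl := Mo.qstar_anti E.θl_mem hθ hθ.1
        have hxlm' : Mo.qstar E.θl ∈ Icc (0:ℝ) E.qbar := Mo.qstar_mem' E.θl
        have hsplit : (∫ y in E.θl..θ, Mo.qstar y) + (∫ y in θ..E.θu, Mo.qstar y)
            = ∫ y in E.θl..E.θu, Mo.qstar y :=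
          intervalIntegral.integral_add_adjacent_intervals
            (Mo.qstar_II E.θl_mem hθ) (Mo.qstar_II hθ E.θu_mem)
        have hlb : (θ - E.θl) * Mo.qstar θ ≤ ∫ y in E.θl..θ, Mo.qstar y := by
          have := intervalIntegral.integral_mono_on (μ := volume) hθ.1
            intervalIntegrable_const (Mo.qstar_II E.θl_mem hθ)
            (f := fun _ => Mo.qstar θ) (g := Mo.qstar) ?_
          · simpa [mul_comm] using this
          · intro y hy
            exact Mo.qstar_anti ⟨hy.1, le_trans hy.2 hθ.2⟩ hθ hy.2
        have hV : E.Vl (Mo.qstar E.θl) - E.Vl (Mo.qstar θ)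
            = ∫ s in (Mo.qstar θ)..(Mo.qstar E.θl), E.Pl s := by
          have := intervalIntegral.integral_interval_sub_left
            (E.Pl_II E.dp.mem0 hxlm') (E.Pl_II E.dp.mem0 hxm')
          unfold Env.Vl
          linarith
        have hPub : (∫ s in (Mo.qstar θ)..(Mo.qstar E.θl), E.Pl s)
            ≤ (Mo.qstar E.θl - Mo.qstar θ) * E.θl := by
          have := intervalIntegral.integral_mono_on (μ := volume) hxl
            (E.Pl_II hxm' hxlm') intervalIntegrable_const
            (f := E.Pl) (g := fun _ => E.θl) ?_
          · simpa [mul_comm] using this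
          · intro s hs
            have : E.Pl s ≤ E.Pl (Mo.qstar θ) :=
              E.Pl_anti.antitoneOn hxm' ⟨le_trans hxm'.1 hs.1, le_trans hs.2 hxlm'.2⟩ hs.1
            linarith
        have hWl0' := hWl0
        unfold Env.Wl at hWl0' ⊢
        nlinarith [hsplit, hlb, hV, hPub, hWl0']
      · -- cases A/B : use (ii) at p = P̲(q*(θ)) ∈ Θ
        have hp : E.Pl (Mo.qstar θ) ∈ E.Θ := ⟨hAB, hp_le⟩
        have hiip := hii _ hp
        have hkey : (∫ y in θ..E.θu, Mo.qstar y)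
            ≤ (E.Pl (Mo.qstar θ) - θ) * Mo.qstar θ
              + ∫ y in (E.Pl (Mo.qstar θ))..E.θu, E.Dl y := by
          rcases le_total θ (E.Pl (Mo.qstar θ)) with h1 | h1
          · have hsp : (∫ y in θ..(E.Pl (Mo.qstar θ)), Mo.qstar y)
                + (∫ y in (E.Pl (Mo.qstar θ))..E.θu, Mo.qstar y)
                = ∫ y in θ..E.θu, Mo.qstar y :=
              intervalIntegral.integral_add_adjacent_intervals
                (Mo.qstar_II hθ hp) (Mo.qstar_II hp E.θu_mem)
            have hub : (∫ y in θ..(E.Pl (Mo.qstar θ)), Mo.qstar y)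
                ≤ (E.Pl (Mo.qstar θ) - θ) * Mo.qstar θ := by
              have := intervalIntegral.integral_mono_on (μ := volume) h1
                (Mo.qstar_II hθ hp) intervalIntegrable_const
                (f := Mo.qstar) (g := fun _ => Mo.qstar θ) ?_
              · simpa [mul_comm] using this
              · intro y hy
                exact Mo.qstar_anti hθ ⟨le_trans hθ.1 hy.1, le_trans hy.2 hp.2⟩ hy.1
            linarith
          · have hsp : (∫ y in (E.Pl (Mo.qstar θ))..θ, Mo.qstar y)
                + (∫ y in θ..E.θu, Mo.qstar y)
                = ∫ y in (E.Pl (Mo.qstar θ))..E.θu, Mo.qstar y :=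
              intervalIntegral.integral_add_adjacent_intervals
                (Mo.qstar_II hp hθ) (Mo.qstar_II hθ E.θu_mem)
            have hlb2 : (θ - E.Pl (Mo.qstar θ)) * Mo.qstar θ
                ≤ ∫ y in (E.Pl (Mo.qstar θ))..θ, Mo.qstar y := by
              have := intervalIntegral.integral_mono_on (μ := volume) h1
                intervalIntegrable_const (Mo.qstar_II hp hθ)
                (f := fun _ => Mo.qstar θ) (g := Mo.qstar) ?_
              · simpa [mul_comm] using this
              · intro y hy
                exact Mo.qstar_anti ⟨le_trans hp.1 hy.1, le_trans hy.2 hθ.2⟩ hθ hy.2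
            linarith
        have hPsi := E.Psi_eq hxm
        unfold Env.Wl
        nlinarith [hkey, hPsi]
    refine ⟨⟨⟨Mo.qstar_anti, fun θ _ => Mo.qstar_mem' θ⟩, hcons⟩, ?_⟩
    intro q' hq'
    unfold Model.J
    apply intervalIntegral.integral_mono_on E.θlu.le
      (Mo.obj_II hq'.1.1 hq'.1.2)
      (Mo.obj_II Mo.qstar_anti (fun θ _ => Mo.qstar_mem' θ))
    intro θ hθ
    have hb := E.feas_bounds hq' θ hθ
    have harg := Mo.argmax (z := Mo.zstar θ) hb.1 hb.2
    have harg' : Mo.Vstar (q' θ) - Mo.zstar θ * q' θ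
        ≤ Mo.Vstar (Mo.qstar θ) - Mo.zstar θ * Mo.qstar θ := harg
    exact mul_le_mul_of_nonneg_right harg' (Mo.fstar_pos θ hθ).le
end
end

section
/- If P* = P̲ (so V* = V̲ and D* = D̲, i.e., there is no demand uncertainty), then the Baron–Myerson-with-quantity-floor schedule q* solves (ROPT); moreover, in this case q*(θ̲) = D̲(θ̲) and q*(θ̄) = D̲(θ̄), i.e., the optimal mechanism is efficient at both endpoints of the cost distribution. -/
open MeasureTheory Set

noncomputable section

namespace NoUnc

variable {E : Env} {Mo : Model E}

lemma Pl_qbar_le (E : Env) : E.Pl E.qbar ≤ E.θl := by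
  by_contra h
  push_neg at h
  have h0 := E.Dl_low _ h
  have := E.Dl_lt
  rw [h0] at this
  exact lt_irrefl _ this

lemma Dl_mem (E : Env) {p : ℝ} (hp : E.Pl E.qbar ≤ p) : E.Dl p ∈ Icc (0:ℝ) E.qbar := by
  rcases le_or_gt p (E.Pl 0) with h | h
  · exact (E.Dl_inv p hp h).1
  · rw [E.Dl_high p h]; exact ⟨le_refl _, E.qbar_pos.le⟩

lemma Pl_Dl (E : Env) {p : ℝ} (hp : E.Pl E.qbar ≤ p) (hp' : p ≤ E.Pl 0) :
    E.Pl (E.Dl p) = p := (E.Dl_inv p hp hp').2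

lemma Dl_anti (E : Env) {p p' : ℝ} (hp : E.Pl E.qbar ≤ p) (hpp : p ≤ p') :
    E.Dl p' ≤ E.Dl p := by
  rcases lt_or_ge (E.Pl 0) p' with h | h
  · rw [E.Dl_high p' h]; exact (Dl_mem E hp).1
  · have hp'q : E.Pl E.qbar ≤ p' := le_trans hp hpp
    have h1 := Pl_Dl E hp (le_trans hpp h)
    have h2 := Pl_Dl E hp'q h
    by_contra hc
    push_neg at hc
    have := E.Pl_anti (Dl_mem E hp) (Dl_mem E hp'q) hc
    rw [h1, h2] at this
    exact absurd hpp (not_le.mpr this)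

lemma θu_mem (E : Env) : E.θu ∈ E.Θ := ⟨E.θlu.le, le_refl _⟩
lemma θl_mem (E : Env) : E.θl ∈ E.Θ := ⟨le_refl _, E.θlu.le⟩

lemma Pl_qbar_le_θu (E : Env) : E.Pl E.qbar ≤ E.θu := le_trans (Pl_qbar_le E) E.θlu.le

lemma ql_mem (E : Env) : E.ql ∈ Icc (0:ℝ) E.qbar := Dl_mem E (Pl_qbar_le_θu E)

lemma Pl_ql (E : Env) : E.Pl E.ql = E.θu := Pl_Dl E (Pl_qbar_le_θu E) E.Pl0.le

lemma ql_pos (E : Env) : 0 < E.ql := by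
  rcases lt_or_ge 0 E.ql with h | h
  · exact h
  · have h0 : E.ql = 0 := le_antisymm h (ql_mem E).1
    have h1 := Pl_ql E
    rw [h0] at h1
    have := E.Pl0
    linarith

lemma ql_le_Dl_θl (E : Env) : E.ql ≤ E.Dl E.θl :=
  Dl_anti E (Pl_qbar_le E) E.θlu.le

lemma ql_lt_qbar (E : Env) : E.ql < E.qbar := lt_of_le_of_lt (ql_le_Dl_θl E) E.Dl_lt

lemma Pl_intInt (E : Env) {a b : ℝ} (ha : a ∈ Icc (0:ℝ) E.qbar) (hb : b ∈ Icc (0:ℝ) E.qbar) :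
    IntervalIntegrable E.Pl volume a b := by
  apply ContinuousOn.intervalIntegrable
  apply E.Pl_cont.mono
  intro x hx
  rcases le_total a b with h | h
  · rw [uIcc_of_le h] at hx; exact ⟨le_trans ha.1 hx.1, le_trans hx.2 hb.2⟩
  · rw [uIcc_of_ge h] at hx; exact ⟨le_trans hb.1 hx.1, le_trans hx.2 ha.2⟩

/-- `V̲(b) - V̲(a) = ∫_a^b P̲` for `a, b ∈ [0, qbar]`. -/
lemma Vl_sub (E : Env) {a b : ℝ} (ha : a ∈ Icc (0:ℝ) E.qbar) (hb : b ∈ Icc (0:ℝ) E.qbar) :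
    E.Vl b - E.Vl a = ∫ s in a..b, E.Pl s := by
  have h0 : (0:ℝ) ∈ Icc (0:ℝ) E.qbar := ⟨le_refl _, E.qbar_pos.le⟩
  exact intervalIntegral.integral_interval_sub_left (Pl_intInt E h0 hb) (Pl_intInt E h0 ha)

lemma fstar_int (Mo : Model E) : IntegrableOn Mo.fstar (Ioc E.θl E.θu) := by
  by_contra h
  have h1 : ¬ IntervalIntegrable Mo.fstar volume E.θl E.θu := fun hI => h hI.1
  have h2 := Mo.Fstar_ac E.θu (θu_mem E)
  rw [Mo.Fstar_u, intervalIntegral.integral_undef h1] at h2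
  exact one_ne_zero h2

lemma Fstar_nonneg (Mo : Model E) {θ : ℝ} (hθ : θ ∈ E.Θ) : 0 ≤ Mo.Fstar θ := by
  rw [Mo.Fstar_ac θ hθ]
  apply intervalIntegral.integral_nonneg hθ.1
  intro y hy
  exact (Mo.fstar_pos y ⟨hy.1, le_trans hy.2 hθ.2⟩).le

lemma zstar_ge (Mo : Model E) {θ : ℝ} (hθ : θ ∈ E.Θ) : θ ≤ Mo.zstar θ := by
  have := div_nonneg (Fstar_nonneg Mo hθ) (Mo.fstar_pos θ hθ).le
  simp only [Model.zstar]
  linarith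

lemma zstar_l (Mo : Model E) : Mo.zstar E.θl = E.θl := by
  simp [Model.zstar, Mo.Fstar_l]

lemma zstar_u_gt (Mo : Model E) : E.θu < Mo.zstar E.θu := by
  have hf := Mo.fstar_pos E.θu (θu_mem E)
  simp only [Model.zstar, Mo.Fstar_u]
  have : 0 < 1 / Mo.fstar E.θu := by positivity
  linarith

lemma zstar_mono' (Mo : Model E) : MonotoneOn Mo.zstar E.Θ := Mo.zstar_mono.monotoneOn

lemma Pl_qbar_le_zstar (Mo : Model E) {θ : ℝ} (hθ : θ ∈ E.Θ) :
    E.Pl E.qbar ≤ Mo.zstar θ :=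
  le_trans (Pl_qbar_le E) (le_trans hθ.1 (zstar_ge Mo hθ))

section WithD
variable (hD : Mo.Dstar = E.Dl)
include hD

lemma qBM_eq (θ : ℝ) : Mo.qBM θ = E.Dl (Mo.zstar θ) := by
  simp [Model.qBM, hD]

lemma qBM_mem {θ : ℝ} (hθ : θ ∈ E.Θ) : Mo.qBM θ ∈ Icc (0:ℝ) E.qbar := by
  rw [qBM_eq hD]
  exact Dl_mem E (Pl_qbar_le_zstar Mo hθ)

lemma qBM_anti : AntitoneOn Mo.qBM E.Θ := by
  intro a ha b hb hab
  rw [qBM_eq hD, qBM_eq hD]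
  exact Dl_anti E (Pl_qbar_le_zstar Mo ha) (zstar_mono' Mo ha hb hab)

lemma qstar_mem {θ : ℝ} (hθ : θ ∈ E.Θ) : Mo.qstar θ ∈ Icc E.ql E.qbar :=
  ⟨le_max_right _ _, max_le (qBM_mem hD hθ).2 (ql_mem E).2⟩

lemma qstar_mem' {θ : ℝ} (hθ : θ ∈ E.Θ) : Mo.qstar θ ∈ Icc (0:ℝ) E.qbar :=
  ⟨le_trans (ql_mem E).1 (qstar_mem hD hθ).1, (qstar_mem hD hθ).2⟩

lemma qstar_anti : AntitoneOn Mo.qstar E.Θ := by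
  intro a ha b hb hab
  exact max_le_max (qBM_anti hD ha hb hab) (le_refl _)

lemma qstar_u : Mo.qstar E.θu = E.ql := by
  have h1 : Mo.qBM E.θu ≤ E.ql := by
    rw [qBM_eq hD]
    exact Dl_anti E (Pl_qbar_le_θu E) (zstar_u_gt Mo).le
  exact max_eq_right h1

lemma qstar_l : Mo.qstar E.θl = E.Dl E.θl := by
  have h1 : Mo.qBM E.θl = E.Dl E.θl := by rw [qBM_eq hD, zstar_l]
  rw [Model.qstar, h1]
  exact max_eq_left (ql_le_Dl_θl E)

/-- `P̲(q*(θ)) ≥ θ` for `θ ∈ Θ`. -/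
lemma Pl_qstar_ge {θ : ℝ} (hθ : θ ∈ E.Θ) : θ ≤ E.Pl (Mo.qstar θ) := by
  rcases le_or_gt (Mo.qBM θ) E.ql with h | h
  · rw [Model.qstar, max_eq_right h, Pl_ql]
    exact hθ.2
  · rw [Model.qstar, max_eq_left h.le]
    have hpos : 0 < Mo.qBM θ := lt_trans (ql_pos E) h
    have hz : Mo.zstar θ ≤ E.Pl 0 := by
      by_contra hc
      push_neg at hc
      have := E.Dl_high _ hc
      rw [qBM_eq hD] at hpos
      rw [this] at hpos
      exact lt_irrefl _ hpos
    have := Pl_Dl E (Pl_qbar_le_zstar Mo hθ) hz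
    rw [qBM_eq hD, this]
    exact le_trans (zstar_ge Mo hθ) (le_refl _)

/-- `P̲(s) ≤ z*(θ)` for `s ≥ q*(θ)`, `s ∈ [0, qbar]`. -/
lemma Pl_le_zstar {θ s : ℝ} (hθ : θ ∈ E.Θ) (hs : s ∈ Icc (0:ℝ) E.qbar)
    (hqs : Mo.qstar θ ≤ s) : E.Pl s ≤ Mo.zstar θ := by
  have hBM : Mo.qBM θ ≤ s := le_trans (le_max_left _ _) hqs
  rcases le_or_gt (Mo.zstar θ) (E.Pl 0) with h | h
  · have h1 := Pl_Dl E (Pl_qbar_le_zstar Mo hθ) h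
    rw [← qBM_eq hD] at h1
    rw [← h1]
    exact (E.Pl_anti.antitoneOn) (qBM_mem hD hθ) hs hBM
  · calc E.Pl s ≤ E.Pl 0 :=
          (E.Pl_anti.antitoneOn) ⟨le_refl _, E.qbar_pos.le⟩ hs hs.1
      _ ≤ Mo.zstar θ := h.le

end WithD

end NoUnc

namespace NoUnc

variable {E : Env} {Mo : Model E}

section WithD
variable (hD : Mo.Dstar = E.Dl)
include hD

/-- Pointwise optimality: for `x ∈ [q_ℓ, qbar]`,
`V̲(x) − z*(θ)x ≤ V̲(q*(θ)) − z*(θ)q*(θ)`. -/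
lemma pointwise_opt {θ x : ℝ} (hθ : θ ∈ E.Θ) (hx : x ∈ Icc E.ql E.qbar) :
    E.Vl x - Mo.zstar θ * x ≤ E.Vl (Mo.qstar θ) - Mo.zstar θ * Mo.qstar θ := by
  set m := Mo.qstar θ with hm
  set z := Mo.zstar θ with hz
  have hmI : m ∈ Icc (0:ℝ) E.qbar := qstar_mem' hD hθ
  have hxI : x ∈ Icc (0:ℝ) E.qbar := ⟨le_trans (ql_mem E).1 hx.1, hx.2⟩
  have hVs : E.Vl m - E.Vl x = ∫ s in x..m, E.Pl s := Vl_sub E hxI hmI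
  have goal2 : z * (m - x) ≤ ∫ s in x..m, E.Pl s := by
    rcases le_or_gt x m with hxm | hxm
    · -- x ≤ m : P̲(s) ≥ z on [x, m]
      rcases le_or_gt (Mo.qBM θ) E.ql with hq | hq
      · -- then m = q_ℓ and x = m
        have hmq : m = E.ql := max_eq_right hq
        have hxeq : x = m := le_antisymm hxm (hmq ▸ hx.1)
        rw [hxeq]
        simp
      · -- m = qBM θ, P̲(m) = z
        have hmq : m = Mo.qBM θ := max_eq_left hq.le
        have hpos : 0 < Mo.qBM θ := lt_trans (ql_pos E) hq
        have hzle : z ≤ E.Pl 0 := by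
          by_contra hc
          push_neg at hc
          have h0 := E.Dl_high _ hc
          rw [qBM_eq hD, h0] at hpos
          exact lt_irrefl _ hpos
        have hPm : E.Pl m = z := by
          rw [hmq, qBM_eq hD]
          exact Pl_Dl E (Pl_qbar_le_zstar Mo hθ) hzle
        have hmono : ∀ s ∈ Icc x m, z ≤ E.Pl s := by
          intro s hs
          rw [← hPm]
          exact (E.Pl_anti.antitoneOn) ⟨le_trans hxI.1 hs.1, le_trans hs.2 hmI.2⟩ hmI hs.2
        calc z * (m - x) = ∫ _ in x..m, z := by
              rw [intervalIntegral.integral_const, smul_eq_mul]; ring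
          _ ≤ ∫ s in x..m, E.Pl s :=
              intervalIntegral.integral_mono_on hxm intervalIntegrable_const
                (Pl_intInt E hxI hmI) hmono
    · -- m < x : P̲(s) ≤ z on [m, x]
      have hmono : ∀ s ∈ Icc m x, E.Pl s ≤ z := by
        intro s hs
        exact Pl_le_zstar hD hθ ⟨le_trans hmI.1 hs.1, le_trans hs.2 hxI.2⟩ hs.1
      have : (∫ s in m..x, E.Pl s) ≤ z * (x - m) := by
        calc (∫ s in m..x, E.Pl s) ≤ ∫ _ in m..x, z :=
              intervalIntegral.integral_mono_on hxm.le (Pl_intInt E hmI hxI)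
                intervalIntegrable_const hmono
          _ = z * (x - m) := by
              rw [intervalIntegral.integral_const, smul_eq_mul]; ring
      rw [intervalIntegral.integral_symm m x]
      linarith
  linarith

/-- The auxiliary potential `H`. -/
def Haux (E : Env) (Mo : Model E) (t : ℝ) : ℝ :=
  (∫ s in E.ql..(Mo.qstar t), E.Pl s) - t * (Mo.qstar t - E.ql)

lemma qstar_sub_intInt {a b : ℝ} (ha : a ∈ E.Θ) (hb : b ∈ E.Θ) :
    IntervalIntegrable (fun y => Mo.qstar y - E.ql) volume a b := by
  apply AntitoneOn.intervalIntegrable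
  intro x hx y hy hxy
  have hsub : uIcc a b ⊆ E.Θ := by
    have h' : uIcc a b ⊆ uIcc E.θl E.θu :=
      uIcc_subset_uIcc (by rw [uIcc_of_le E.θlu.le]; exact ha)
        (by rw [uIcc_of_le E.θlu.le]; exact hb)
    rwa [uIcc_of_le E.θlu.le] at h'
  have := qstar_anti hD (hsub hx) (hsub hy) hxy
  dsimp only
  linarith

lemma step {t1 t2 : ℝ} (h1 : t1 ∈ E.Θ) (h2 : t2 ∈ E.Θ) (h12 : t1 ≤ t2) :
    (∫ y in t1..t2, (Mo.qstar y - E.ql)) + (t2 - t1) * (Mo.qstar t2 - Mo.qstar t1)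
      ≤ Haux E Mo t1 - Haux E Mo t2 := by
  set q1 := Mo.qstar t1 with hq1
  set q2 := Mo.qstar t2 with hq2
  have hq12 : q2 ≤ q1 := qstar_anti hD h1 h2 h12
  have hq1I : q1 ∈ Icc (0:ℝ) E.qbar := qstar_mem' hD h1
  have hq2I : q2 ∈ Icc (0:ℝ) E.qbar := qstar_mem' hD h2
  have hqlI : E.ql ∈ Icc (0:ℝ) E.qbar := ql_mem E
  have hsub : (∫ s in E.ql..q1, E.Pl s) - (∫ s in E.ql..q2, E.Pl s)
      = ∫ s in q2..q1, E.Pl s :=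
    intervalIntegral.integral_interval_sub_left (Pl_intInt E hqlI hq1I) (Pl_intInt E hqlI hq2I)
  have hlow : t1 * (q1 - q2) ≤ ∫ s in q2..q1, E.Pl s := by
    have hmono : ∀ s ∈ Icc q2 q1, t1 ≤ E.Pl s := by
      intro s hs
      have hsI : s ∈ Icc (0:ℝ) E.qbar := ⟨le_trans hq2I.1 hs.1, le_trans hs.2 hq1I.2⟩
      calc t1 ≤ E.Pl q1 := Pl_qstar_ge hD h1
        _ ≤ E.Pl s := (E.Pl_anti.antitoneOn) hsI hq1I hs.2
    calc t1 * (q1 - q2) = ∫ _ in q2..q1, t1 := by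
          rw [intervalIntegral.integral_const, smul_eq_mul]; ring
      _ ≤ ∫ s in q2..q1, E.Pl s :=
          intervalIntegral.integral_mono_on hq12 intervalIntegrable_const
            (Pl_intInt E hq2I hq1I) hmono
  have hup : (∫ y in t1..t2, (Mo.qstar y - E.ql)) ≤ (t2 - t1) * (q1 - E.ql) := by
    have hmono : ∀ y ∈ Icc t1 t2, Mo.qstar y - E.ql ≤ q1 - E.ql := by
      intro y hy
      have hyΘ : y ∈ E.Θ := ⟨le_trans h1.1 hy.1, le_trans hy.2 h2.2⟩
      have := qstar_anti hD h1 hyΘ hy.1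
      linarith
    calc (∫ y in t1..t2, (Mo.qstar y - E.ql)) ≤ ∫ _ in t1..t2, (q1 - E.ql) :=
          intervalIntegral.integral_mono_on h12 (qstar_sub_intInt hD h1 h2)
            intervalIntegrable_const hmono
      _ = (t2 - t1) * (q1 - E.ql) := by
          rw [intervalIntegral.integral_const, smul_eq_mul]
  simp only [Haux]
  rw [← hq1, ← hq2]
  linarith [hsub, hlow, hup]

end WithD

end NoUnc

namespace NoUnc

variable {E : Env} {Mo : Model E}

section WithD
variable (hD : Mo.Dstar = E.Dl)
include hD

lemma key_n {θ : ℝ} (hθ : θ ∈ E.Θ) (n : ℕ) (hn : 0 < n) :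
    (∫ y in θ..E.θu, (Mo.qstar y - E.ql))
      ≤ Haux E Mo θ - Haux E Mo E.θu + (E.θu - θ) * E.qbar / n := by
  have hnR : (0:ℝ) < n := Nat.cast_pos.mpr hn
  set Δ : ℝ := (E.θu - θ) / n with hΔdef
  have hΔ : 0 ≤ Δ := div_nonneg (sub_nonneg.mpr hθ.2) hnR.le
  set t : ℕ → ℝ := fun i => θ + i * Δ with htdef
  have ht0 : t 0 = θ := by simp [htdef]
  have htn : t n = E.θu := by
    simp only [htdef, hΔdef]
    field_simp
    ring
  have hmono : ∀ i j : ℕ, i ≤ j → t i ≤ t j := by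
    intro i j hij
    simp only [htdef]
    have : (i:ℝ) ≤ j := Nat.cast_le.mpr hij
    nlinarith
  have hmem : ∀ i, i ≤ n → t i ∈ E.Θ := by
    intro i hi
    constructor
    · calc E.θl ≤ θ := hθ.1
        _ = t 0 := ht0.symm
        _ ≤ t i := hmono 0 i (Nat.zero_le i)
    · calc t i ≤ t n := hmono i n hi
        _ = E.θu := htn
  have hstep : ∀ i ∈ Finset.range n,
      (∫ y in t i..t (i+1), (Mo.qstar y - E.ql))
        + (t (i+1) - t i) * (Mo.qstar (t (i+1)) - Mo.qstar (t i))
      ≤ Haux E Mo (t i) - Haux E Mo (t (i+1)) := by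
    intro i hi
    have hi' := Finset.mem_range.mp hi
    exact step hD (hmem i hi'.le) (hmem (i+1) hi') (hmono i (i+1) (Nat.le_succ i))
  have hsum := Finset.sum_le_sum hstep
  rw [Finset.sum_add_distrib] at hsum
  have hA : (∑ i ∈ Finset.range n, ∫ y in t i..t (i+1), (Mo.qstar y - E.ql))
      = ∫ y in θ..E.θu, (Mo.qstar y - E.ql) := by
    rw [intervalIntegral.sum_integral_adjacent_intervals
      (fun k hk => qstar_sub_intInt hD (hmem k hk.le) (hmem (k+1) hk))]
    rw [ht0, htn]
  have hdiff : ∀ i : ℕ, t (i+1) - t i = Δ := by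
    intro i
    simp only [htdef]
    push_cast
    ring
  have hB : (∑ i ∈ Finset.range n, (t (i+1) - t i) * (Mo.qstar (t (i+1)) - Mo.qstar (t i)))
      = Δ * (Mo.qstar E.θu - Mo.qstar θ) := by
    calc (∑ i ∈ Finset.range n, (t (i+1) - t i) * (Mo.qstar (t (i+1)) - Mo.qstar (t i)))
        = ∑ i ∈ Finset.range n, Δ * (Mo.qstar (t (i+1)) - Mo.qstar (t i)) := by
          refine Finset.sum_congr rfl fun i _ => by rw [hdiff i]
      _ = Δ * ∑ i ∈ Finset.range n, (Mo.qstar (t (i+1)) - Mo.qstar (t i)) := by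
          rw [Finset.mul_sum]
      _ = Δ * (Mo.qstar (t n) - Mo.qstar (t 0)) := by
          rw [Finset.sum_range_sub (fun i => Mo.qstar (t i))]
      _ = Δ * (Mo.qstar E.θu - Mo.qstar θ) := by rw [ht0, htn]
  have hC : (∑ i ∈ Finset.range n, (Haux E Mo (t i) - Haux E Mo (t (i+1))))
      = Haux E Mo θ - Haux E Mo E.θu := by
    rw [Finset.sum_range_sub' (fun i => Haux E Mo (t i)), ht0, htn]
  rw [hA, hB, hC] at hsum
  have hqu : Mo.qstar E.θu - Mo.qstar θ ≥ -E.qbar := by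
    have h1 := (qstar_mem' hD (θu_mem E)).1
    have h2 := (qstar_mem' hD hθ).2
    linarith
  have hbd : Δ * (Mo.qstar E.θu - Mo.qstar θ) ≥ -(Δ * E.qbar) := by
    nlinarith
  have hΔq : Δ * E.qbar = (E.θu - θ) * E.qbar / n := by
    rw [hΔdef]; ring
  linarith

lemma telescope {θ : ℝ} (hθ : θ ∈ E.Θ) :
    (∫ y in θ..E.θu, (Mo.qstar y - E.ql)) ≤ Haux E Mo θ - Haux E Mo E.θu := by
  by_contra hc
  push_neg at hc
  set L := ∫ y in θ..E.θu, (Mo.qstar y - E.ql)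
  set R := Haux E Mo θ - Haux E Mo E.θu
  set d := L - R with hd
  have hdpos : 0 < d := sub_pos.mpr hc
  set c := (E.θu - θ) * E.qbar with hcdef
  have hc0 : 0 ≤ c := mul_nonneg (sub_nonneg.mpr hθ.2) E.qbar_pos.le
  obtain ⟨n, hn⟩ := exists_nat_gt (max 1 (c / d))
  have hn1 : (1:ℝ) < n := lt_of_le_of_lt (le_max_left _ _) hn
  have hnpos : 0 < n := by exact_mod_cast lt_trans zero_lt_one hn1
  have hnR : (0:ℝ) < n := Nat.cast_pos.mpr hnpos
  have hcd : c / d < n := lt_of_le_of_lt (le_max_right _ _) hn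
  have hlt : c / n < d := by
    rw [div_lt_iff₀ hnR]
    calc c = d * (c / d) := by field_simp
      _ < d * n := by exact mul_lt_mul_of_pos_left hcd hdpos
  have := key_n hD hθ n hnpos
  rw [← hcdef] at this
  have h2 : L ≤ R + c / n := this
  clear_value L R d c
  linarith

lemma Haux_u : Haux E Mo E.θu = 0 := by
  simp [Haux, qstar_u hD, intervalIntegral.integral_same]

lemma qstar_intInt {a b : ℝ} (ha : a ∈ E.Θ) (hb : b ∈ E.Θ) :
    IntervalIntegrable Mo.qstar volume a b := by
  have h := (qstar_sub_intInt hD ha hb).add (intervalIntegrable_const (c := E.ql))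
  have : (fun y => Mo.qstar y - E.ql + E.ql) = Mo.qstar := by funext y; ring
  rwa [this] at h

lemma feas {θ : ℝ} (hθ : θ ∈ E.Θ) : E.Gstar ≤ E.Wl Mo.qstar θ := by
  have h1 := telescope hD hθ
  rw [Haux_u hD] at h1
  have hsplit : (∫ y in θ..E.θu, (Mo.qstar y - E.ql))
      = (∫ y in θ..E.θu, Mo.qstar y) - (E.θu - θ) * E.ql := by
    rw [intervalIntegral.integral_sub (qstar_intInt hD hθ (θu_mem E)) intervalIntegrable_const,
      intervalIntegral.integral_const, smul_eq_mul]
  have hVs : E.Vl (Mo.qstar θ) - E.Vl E.ql = ∫ s in E.ql..(Mo.qstar θ), E.Pl s :=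
    Vl_sub E (ql_mem E) (qstar_mem' hD hθ)
  simp only [Env.Gstar, Env.Wl, Haux] at *
  linarith

lemma feasible : E.FeasibleROPT Mo.qstar :=
  ⟨⟨qstar_anti hD, fun θ hθ => qstar_mem' hD hθ⟩, fun θ hθ => feas hD hθ⟩

end WithD

/-- Any feasible schedule produces exactly `q_ℓ` at `θu`. -/
lemma feas_at_u {q' : ℝ → ℝ} (h : E.FeasibleROPT q') : q' E.θu = E.ql := by
  set x := q' E.θu with hxdef
  have hx : x ∈ Icc (0:ℝ) E.qbar := h.1.2 _ (θu_mem E)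
  have hqlI := ql_mem E
  have hG := h.2 E.θu (θu_mem E)
  simp only [Env.Gstar, Env.Wl, intervalIntegral.integral_same, ← hxdef] at hG
  -- hG : Vl ql − θu ql ≤ Vl x − θu x − 0
  have hkey : E.Vl E.ql - E.θu * E.ql ≤ E.Vl x - E.θu * x := by linarith
  by_contra hne
  rcases lt_or_gt_of_ne hne with hlt | hgt
  · -- x < ql
    set c := (x + E.ql) / 2 with hcdef
    have hxc : x < c := by rw [hcdef]; linarith
    have hcql : c < E.ql := by rw [hcdef]; linarith
    have hcI : c ∈ Icc (0:ℝ) E.qbar := ⟨le_trans hx.1 hxc.le, le_trans hcql.le hqlI.2⟩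
    have hPc : E.θu < E.Pl c := by
      have := E.Pl_anti hcI hqlI hcql
      rwa [Pl_ql E] at this
    have hsplit : (∫ s in x..E.ql, E.Pl s)
        = (∫ s in x..c, E.Pl s) + ∫ s in c..E.ql, E.Pl s :=
      (intervalIntegral.integral_add_adjacent_intervals (Pl_intInt E hx hcI)
        (Pl_intInt E hcI hqlI)).symm
    have hA : (c - x) * E.Pl c ≤ ∫ s in x..c, E.Pl s := by
      calc (c - x) * E.Pl c = ∫ _ in x..c, E.Pl c := by
            rw [intervalIntegral.integral_const, smul_eq_mul]
        _ ≤ ∫ s in x..c, E.Pl s := by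
            refine intervalIntegral.integral_mono_on hxc.le intervalIntegrable_const
              (Pl_intInt E hx hcI) fun s hs => ?_
            exact (E.Pl_anti.antitoneOn) ⟨le_trans hx.1 hs.1, le_trans hs.2 hcI.2⟩ hcI hs.2
    have hB : (E.ql - c) * E.θu ≤ ∫ s in c..E.ql, E.Pl s := by
      calc (E.ql - c) * E.θu = ∫ _ in c..E.ql, E.θu := by
            rw [intervalIntegral.integral_const, smul_eq_mul]
        _ ≤ ∫ s in c..E.ql, E.Pl s := by
            refine intervalIntegral.integral_mono_on hcql.le intervalIntegrable_const
              (Pl_intInt E hcI hqlI) fun s hs => ?_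
            rw [← Pl_ql E]
            exact (E.Pl_anti.antitoneOn) ⟨le_trans hcI.1 hs.1, le_trans hs.2 hqlI.2⟩ hqlI hs.2
    have hVs : E.Vl E.ql - E.Vl x = ∫ s in x..E.ql, E.Pl s := Vl_sub E hx hqlI
    have hprod : (c - x) * E.θu < (c - x) * E.Pl c :=
      mul_lt_mul_of_pos_left hPc (sub_pos.mpr hxc)
    linarith
  · -- ql < x
    set c := (E.ql + x) / 2 with hcdef
    have hqlc : E.ql < c := by rw [hcdef]; linarith
    have hcx : c < x := by rw [hcdef]; linarith
    have hcI : c ∈ Icc (0:ℝ) E.qbar := ⟨le_trans hqlI.1 hqlc.le, le_trans hcx.le hx.2⟩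
    have hPc : E.Pl c < E.θu := by
      have := E.Pl_anti hqlI hcI hqlc
      rwa [Pl_ql E] at this
    have hsplit : (∫ s in E.ql..x, E.Pl s)
        = (∫ s in E.ql..c, E.Pl s) + ∫ s in c..x, E.Pl s :=
      (intervalIntegral.integral_add_adjacent_intervals (Pl_intInt E hqlI hcI)
        (Pl_intInt E hcI hx)).symm
    have hA : (∫ s in E.ql..c, E.Pl s) ≤ (c - E.ql) * E.θu := by
      calc (∫ s in E.ql..c, E.Pl s) ≤ ∫ _ in E.ql..c, E.θu := by
            refine intervalIntegral.integral_mono_on hqlc.le (Pl_intInt E hqlI hcI)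
              intervalIntegrable_const fun s hs => ?_
            rw [← Pl_ql E]
            exact (E.Pl_anti.antitoneOn) hqlI ⟨le_trans hqlI.1 hs.1, le_trans hs.2 hcI.2⟩ hs.1
        _ = (c - E.ql) * E.θu := by rw [intervalIntegral.integral_const, smul_eq_mul]
    have hB : (∫ s in c..x, E.Pl s) ≤ (x - c) * E.Pl c := by
      calc (∫ s in c..x, E.Pl s) ≤ ∫ _ in c..x, E.Pl c := by
            refine intervalIntegral.integral_mono_on hcx.le (Pl_intInt E hcI hx)
              intervalIntegrable_const fun s hs => ?_
            exact (E.Pl_anti.antitoneOn) hcI ⟨le_trans hcI.1 hs.1, le_trans hs.2 hx.2⟩ hs.1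
        _ = (x - c) * E.Pl c := by rw [intervalIntegral.integral_const, smul_eq_mul]
    have hVs : E.Vl x - E.Vl E.ql = ∫ s in E.ql..x, E.Pl s := Vl_sub E hqlI hx
    have hprod : (x - c) * E.Pl c < (x - c) * E.θu :=
      mul_lt_mul_of_pos_left hPc (sub_pos.mpr hcx)
    linarith

lemma feas_ge_ql {q' : ℝ → ℝ} (h : E.FeasibleROPT q') {θ : ℝ} (hθ : θ ∈ E.Θ) :
    E.ql ≤ q' θ := by
  rw [← feas_at_u h]
  exact h.1.1 hθ (θu_mem E) hθ.2

end NoUnc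

namespace NoUnc

variable {E : Env}

lemma Vl_contOn (E : Env) : ContinuousOn E.Vl (Icc (0:ℝ) E.qbar) := by
  have h1 : IntegrableOn E.Pl (uIcc (0:ℝ) E.qbar) volume := by
    rw [uIcc_of_le E.qbar_pos.le]
    exact E.Pl_cont.integrableOn_Icc
  have h2 := intervalIntegral.continuousOn_primitive_interval h1
  rw [uIcc_of_le E.qbar_pos.le] at h2
  exact h2

lemma integrand_int (Mo : Model E) {q : ℝ → ℝ} (hq : E.IsSchedule q) :
    IntervalIntegrable (fun θ => (E.Vl (q θ) - Mo.zstar θ * q θ) * Mo.fstar θ)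
      volume E.θl E.θu := by
  rw [intervalIntegrable_iff_integrableOn_Ioc_of_le E.θlu.le]
  set μ := volume.restrict (Ioc E.θl E.θu) with hμ
  have hIoc : (Ioc E.θl E.θu) ⊆ E.Θ := Ioc_subset_Icc_self
  have hf : Integrable Mo.fstar μ := fstar_int Mo
  set clamp : ℝ → ℝ := fun x => max 0 (min x E.qbar) with hcl
  have hclampc : Continuous clamp := by
    exact continuous_const.max ((continuous_id.min continuous_const))
  have hclmem : ∀ x, clamp x ∈ Icc (0:ℝ) E.qbar := fun x =>
    ⟨le_max_left _ _, max_le E.qbar_pos.le (min_le_right _ _)⟩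
  have hVlc := Vl_contOn E
  have hVc : Continuous (fun x => E.Vl (clamp x)) :=
    hVlc.comp_continuous hclampc hclmem
  have hqm : AEMeasurable q μ :=
    aemeasurable_restrict_of_antitoneOn measurableSet_Ioc (hq.1.mono hIoc)
  have hqmem_ae : ∀ᵐ θ ∂μ, q θ ∈ Icc (0:ℝ) E.qbar :=
    (ae_restrict_iff' measurableSet_Ioc).mpr (ae_of_all _ fun θ hθ => hq.2 θ (hIoc hθ))
  have h1meas : AEMeasurable (fun θ => E.Vl (clamp (q θ))) μ :=
    hVc.measurable.comp_aemeasurable hqm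
  have heq : (fun θ => E.Vl (q θ)) =ᵐ[μ] (fun θ => E.Vl (clamp (q θ))) := by
    filter_upwards [hqmem_ae] with θ hθ
    have hc : clamp (q θ) = q θ := by
      rw [hcl]
      simp only [min_eq_left hθ.2, max_eq_right hθ.1]
    rw [hc]
  have hVlq : AEMeasurable (fun θ => E.Vl (q θ)) μ := h1meas.congr heq.symm
  have hzc : ContinuousOn Mo.zstar E.Θ := Mo.zstar_cont
  have hz : AEMeasurable Mo.zstar μ :=
    (hzc.mono hIoc).aemeasurable measurableSet_Ioc
  have hg : AEMeasurable (fun θ => E.Vl (q θ) - Mo.zstar θ * q θ) μ :=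
    hVlq.sub (hz.mul hqm)
  obtain ⟨C1, hC1⟩ := isCompact_Icc.exists_bound_of_continuousOn hVlc
  obtain ⟨C2, hC2⟩ := (isCompact_Icc (a := E.θl) (b := E.θu)).exists_bound_of_continuousOn hzc
  have hbound : ∀ᵐ θ ∂μ, ‖E.Vl (q θ) - Mo.zstar θ * q θ‖ ≤ C1 + C2 * E.qbar := by
    refine (ae_restrict_iff' measurableSet_Ioc).mpr (ae_of_all _ fun θ hθ => ?_)
    have hθΘ : θ ∈ E.Θ := hIoc hθ
    have hqθ := hq.2 θ hθΘ
    have h1 := hC1 (q θ) hqθ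
    have h2 := hC2 θ hθΘ
    have hC2pos : 0 ≤ C2 := le_trans (norm_nonneg _) h2
    have hqn : ‖q θ‖ ≤ E.qbar := by
      rw [Real.norm_eq_abs, abs_le]
      exact ⟨le_trans (neg_nonpos_of_nonneg E.qbar_pos.le) hqθ.1, hqθ.2⟩
    calc ‖E.Vl (q θ) - Mo.zstar θ * q θ‖
        ≤ ‖E.Vl (q θ)‖ + ‖Mo.zstar θ * q θ‖ := norm_sub_le _ _
      _ = ‖E.Vl (q θ)‖ + ‖Mo.zstar θ‖ * ‖q θ‖ := by rw [norm_mul]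
      _ ≤ C1 + C2 * E.qbar := by
          have := mul_le_mul h2 hqn (norm_nonneg _) hC2pos
          linarith
  exact Integrable.bdd_mul hf hg.aestronglyMeasurable hbound

end NoUnc

/-- Corollary 2 (no demand uncertainty): if `P* = P̲` (so `V* = V̲` and `D* = D̲`),
then `q*` solves (ROPT), and the optimal mechanism is efficient at both endpoints:
`q*(θl) = D̲(θl)` and `q*(θu) = D̲(θu)`. -/
theorem BMfloor_optimal_no_demand_uncertainty (E : Env) (Mo : Model E)
    (hP : Mo.Pstar = E.Pl) (hD : Mo.Dstar = E.Dl) :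
    Mo.SolvesROPT Mo.qstar ∧ Mo.qstar E.θl = E.Dl E.θl ∧ Mo.qstar E.θu = E.Dl E.θu := by

  have hV : Mo.Vstar = E.Vl := by
    funext x
    simp [Model.Vstar, Env.Vl, hP]
  refine ⟨⟨NoUnc.feasible hD, ?_⟩, NoUnc.qstar_l hD, NoUnc.qstar_u hD⟩
  intro q' hq'
  simp only [Model.J, hV]
  refine intervalIntegral.integral_mono_on E.θlu.le (NoUnc.integrand_int Mo hq'.1)
    (NoUnc.integrand_int Mo (NoUnc.feasible hD).1) fun θ hθ => ?_
  refine mul_le_mul_of_nonneg_right ?_ (Mo.fstar_pos θ hθ).le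
  exact NoUnc.pointwise_opt hD hθ ⟨NoUnc.feas_ge_ql hq' hθ, (hq'.1.2 θ hθ).2⟩
end
end
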